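/- arXiv:2109.01324 — 2 statements merged into one kernel-verified Lean document; each statement's English description precedes it below -/
import Mathlib

section
/- Let Γ be a strongly-connected weighted digraph and suppose e = (v,u) is an edge of Γ. Then the hitting time of the random walk with transition matrix P = D⁻¹A satisfies H(u,v) = (1/(τ_v·ω(e))) · Σ_{T ∈ 𝕋*_e} d_{r(T)}·ω(T), where 𝕋*_e denotes the set of all spanning in-trees of Γ containing the edge e, r(T) the root of T, d_u = Σ_v ω(u,v), ω(T) = Π_{e'∈E(T)} ω(e'), and τ_v the total weight of spanning in-trees rooted at v. -/
open scoped Classical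
open Finset Matrix

namespace Paper

variable {V : Type*} [Fintype V] [DecidableEq V]

/-- Out-degree of `u` in the weighted digraph with weight function `ω`. -/
noncomputable def deg (ω : V → V → ℝ) (u : V) : ℝ := ∑ v, ω u v

/-- A weighted digraph is strongly connected if every vertex can reach every other
vertex along edges of positive weight. -/
def StronglyConnected (ω : V → V → ℝ) : Prop :=
  ∀ u v : V, Relation.ReflTransGen (fun a b => 0 < ω a b) u v

/-- The combinatorial Laplacian `L = D - A` of a weighted digraph. -/
noncomputable def lap (ω : V → V → ℝ) : Matrix V V ℝ :=
  Matrix.of fun u v => (if u = v then deg ω u else 0) - ω u v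

/-- The transition probability matrix `P = D⁻¹ A` of the random walk. -/
noncomputable def trans (ω : V → V → ℝ) : Matrix V V ℝ :=
  Matrix.of fun u v => ω u v / deg ω u

/-- `G` is the Moore–Penrose pseudoinverse of `M` (four Penrose conditions). -/
def IsMoorePenrose (M G : Matrix V V ℝ) : Prop :=
  M * G * M = M ∧ G * M * G = G ∧ (M * G)ᵀ = M * G ∧ (G * M)ᵀ = G * M

/-- `v` reaches `r` under iteration of the parent function `f`. -/
def Reaches (f : V → V) (v r : V) : Prop := ∃ k : ℕ, f^[k] v = r

/-- `f` encodes a spanning in-tree of the weighted digraph `ω` rooted at `r`: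
every non-root vertex has its unique out-edge `(v, f v)` an edge of the digraph,
the root is a fixed point, and every vertex reaches the root. -/
def IsInTree (ω : V → V → ℝ) (r : V) (f : V → V) : Prop :=
  f r = r ∧ (∀ v, v ≠ r → 0 < ω v (f v)) ∧ ∀ v, Reaches f v r

/-- The weight of the spanning in-tree encoded by `f` with root `r`. -/
noncomputable def treeWeight (ω : V → V → ℝ) (r : V) (f : V → V) : ℝ :=
  ∏ v ∈ Finset.univ.erase r, ω v (f v)

/-- `τ_r`: total weight of spanning in-trees rooted at `r`. -/
noncomputable def tau (ω : V → V → ℝ) (r : V) : ℝ :=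
  ∑ f ∈ Finset.univ.filter (fun f : V → V => IsInTree ω r f), treeWeight ω r f

/-- `f` encodes a rooted spanning 2-forest with (distinct) roots `r₁`, `r₂`. -/
def IsForest2 (ω : V → V → ℝ) (r₁ r₂ : V) (f : V → V) : Prop :=
  r₁ ≠ r₂ ∧ f r₁ = r₁ ∧ f r₂ = r₂ ∧ (∀ v, v ≠ r₁ → v ≠ r₂ → 0 < ω v (f v)) ∧
    ∀ v, Reaches f v r₁ ∨ Reaches f v r₂

/-- The weight of the rooted spanning 2-forest encoded by `f` with roots `r₁`, `r₂`. -/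
noncomputable def forestWeight (ω : V → V → ℝ) (r₁ r₂ : V) (f : V → V) : ℝ :=
  ∏ v ∈ (Finset.univ.erase r₁).erase r₂, ω v (f v)

/-- The component of the root `b`: vertices reaching `b` under `f`. -/
noncomputable def comp (f : V → V) (b : V) : Finset V :=
  Finset.univ.filter (fun z => Reaches f z b)

/-! ### Undirected weighted graphs, edges as unordered pairs -/

/-- Weighted degree in an undirected weighted graph given by `ωs : Sym2 V → ℝ`. -/
noncomputable def degS (ωs : Sym2 V → ℝ) (u : V) : ℝ := ∑ v, ωs s(u, v)

/-- The volume of an undirected weighted graph. -/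
noncomputable def volS (ωs : Sym2 V → ℝ) : ℝ := ∑ u, degS ωs u

/-- Connectivity of an undirected weighted graph. -/
def ConnectedW (ωs : Sym2 V → ℝ) : Prop :=
  ∀ u v : V, Relation.ReflTransGen (fun a b => 0 < ωs s(a, b)) u v

/-- An edge set `E` is a spanning tree of the weighted undirected graph `ωs`. -/
def IsWTree (ωs : Sym2 V → ℝ) (E : Finset (Sym2 V)) : Prop :=
  (∀ e ∈ E, 0 < ωs e) ∧ (SimpleGraph.fromEdgeSet (E : Set (Sym2 V))).IsAcyclic ∧
    (SimpleGraph.fromEdgeSet (E : Set (Sym2 V))).Connected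

/-- An edge set `E` is a spanning 2-forest of the weighted undirected graph `ωs`
(acyclic, with exactly two connected components). -/
def IsWTwoForest (ωs : Sym2 V → ℝ) (E : Finset (Sym2 V)) : Prop :=
  (∀ e ∈ E, 0 < ωs e) ∧ (SimpleGraph.fromEdgeSet (E : Set (Sym2 V))).IsAcyclic ∧
    Nat.card (SimpleGraph.fromEdgeSet (E : Set (Sym2 V))).ConnectedComponent = 2

/-- The weight of a subgraph given by an edge set. -/
noncomputable def wgt (ωs : Sym2 V → ℝ) (E : Finset (Sym2 V)) : ℝ := ∏ e ∈ E, ωs e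

/-- Total weight of spanning trees of the weighted undirected graph `ωs`. -/
noncomputable def tauW (ωs : Sym2 V → ℝ) : ℝ :=
  ∑ E ∈ Finset.univ.filter (fun E : Finset (Sym2 V) => IsWTree ωs E), wgt ωs E

/-- The combinatorial Laplacian of a weighted undirected graph. -/
noncomputable def lapW (ωs : Sym2 V → ℝ) : Matrix V V ℝ :=
  Matrix.of fun u v => (if u = v then degS ωs u else 0) - ωs s(u, v)

/-! ### Simple graphs -/

/-- An edge set `E` is a spanning tree of the simple graph `G`. -/
def IsSTree (G : SimpleGraph V) (E : Finset (Sym2 V)) : Prop :=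
  (E : Set (Sym2 V)) ⊆ G.edgeSet ∧ (SimpleGraph.fromEdgeSet (E : Set (Sym2 V))).IsAcyclic ∧
    (SimpleGraph.fromEdgeSet (E : Set (Sym2 V))).Connected

/-- An edge set `E` is a spanning 2-forest of the simple graph `G`. -/
def IsSTwoForest (G : SimpleGraph V) (E : Finset (Sym2 V)) : Prop :=
  (E : Set (Sym2 V)) ⊆ G.edgeSet ∧ (SimpleGraph.fromEdgeSet (E : Set (Sym2 V))).IsAcyclic ∧
    Nat.card (SimpleGraph.fromEdgeSet (E : Set (Sym2 V))).ConnectedComponent = 2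

/-- The number of spanning trees of the simple graph `G`. -/
noncomputable def treeCount (G : SimpleGraph V) : ℕ :=
  (Finset.univ.filter (fun E : Finset (Sym2 V) => IsSTree G E)).card


set_option linter.unusedSectionVars false
set_option linter.unusedVariables false
set_option maxHeartbeats 1000000

section Toolkit
variable {f g : V → V} {x v w a b c r y z : V}
lemma reach_refl (f : V → V) (a : V) : Reaches f a a := ⟨0, rfl⟩
lemma reach_trans (hab : Reaches f a b) (hbc : Reaches f b c) : Reaches f a c := by
  rcases hab with ⟨k, rfl⟩; rcases hbc with ⟨l, rfl⟩
  exact ⟨l + k, Function.iterate_add_apply f l k a⟩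
lemma reach_step (h : Reaches f (f a) b) : Reaches f a b := by
  rcases h with ⟨k, hk⟩
  exact ⟨k + 1, by rw [Function.iterate_succ_apply]; exact hk⟩
lemma reach_shift (h : Reaches f a b) (hab : a ≠ b) : Reaches f (f a) b := by
  rcases h with ⟨k, hk⟩
  cases k with
  | zero => exact absurd hk hab
  | succ k => exact ⟨k, by rwa [Function.iterate_succ_apply] at hk⟩
lemma reach_fixed (hv : f v = v) (h : Reaches f v b) : b = v := by
  rcases h with ⟨k, hk⟩; rw [Function.iterate_fixed hv] at hk; exact hk.symm
lemma reach_total (ha : Reaches f y a) (hb : Reaches f y b) :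
    Reaches f a b ∨ Reaches f b a := by
  rcases ha with ⟨i, rfl⟩; rcases hb with ⟨j, rfl⟩
  rcases le_total i j with hij | hij
  · exact Or.inl ⟨j - i, by rw [← Function.iterate_add_apply, Nat.sub_add_cancel hij]⟩
  · exact Or.inr ⟨i - j, by rw [← Function.iterate_add_apply, Nat.sub_add_cancel hij]⟩
lemma periodic_mul {p : ℕ} (hp : f^[p] x = x) : ∀ n, f^[p * n] x = x := by
  intro n
  induction n with
  | zero => simp
  | succ n ih =>
      have : p * (n + 1) = p * n + p := by ring
      rw [this, Function.iterate_add_apply, hp, ih]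
lemma cyc_back {p : ℕ} (hp0 : 0 < p) (hp : f^[p] x = x) (h : Reaches f x b) :
    Reaches f b x := by
  rcases h with ⟨i, rfl⟩
  have hle : i ≤ p * (i + 1) := le_trans (Nat.le_succ i) (Nat.le_mul_of_pos_left (i + 1) hp0)
  refine ⟨p * (i + 1) - i, ?_⟩
  rw [← Function.iterate_add_apply, Nat.sub_add_cancel hle]
  exact periodic_mul hp (i + 1)
lemma fixpt_reach {m k : ℕ} (hρ : f r = r) (hm0 : 0 < m) (hm : f^[m] z = z)
    (hk : f^[k] z = r) : z = r := by
  have h1 : f^[m * (k + 1)] z = z := periodic_mul hm (k + 1)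
  have hle : k ≤ m * (k + 1) := le_trans (Nat.le_succ k) (Nat.le_mul_of_pos_left (k + 1) hm0)
  have h2 : f^[m * (k + 1)] z = r := by
    rw [← Nat.sub_add_cancel hle, Function.iterate_add_apply, hk, Function.iterate_fixed hρ]
  rw [← h1, h2]
lemma agree_iterate (hfg : ∀ z, z ≠ x → f z = g z) :
    ∀ m, (∀ j, j < m → f^[j] y ≠ x) → f^[m] y = g^[m] y := by
  intro m
  induction m with
  | zero => intro _; rfl
  | succ m ih =>
      intro hall
      have h1 : f^[m] y = g^[m] y := ih fun j hj => hall j (Nat.lt_succ_of_lt hj)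
      rw [Function.iterate_succ_apply', Function.iterate_succ_apply',
        hfg _ (hall m (Nat.lt_succ_self m)), h1]
lemma reach_x_transfer (hfg : ∀ z, z ≠ x → f z = g z) (h : Reaches f y x) :
    Reaches g y x := by
  rcases h with ⟨k, hk⟩
  induction k using Nat.strong_induction_on with
  | _ k IH =>
    by_cases hall : ∀ j, j < k → f^[j] y ≠ x
    · exact ⟨k, by rw [← agree_iterate hfg k hall]; exact hk⟩
    · push_neg at hall
      obtain ⟨j, hj, hjx⟩ := hall
      exact IH j hj hjx
lemma reach_x_iff (hfg : ∀ z, z ≠ x → f z = g z) : Reaches f y x ↔ Reaches g y x :=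
  ⟨reach_x_transfer hfg, reach_x_transfer fun z hz => (hfg z hz).symm⟩
lemma not_reach_x_eq (hfg : ∀ z, z ≠ x → f z = g z) (h : ¬ Reaches f y x) (m : ℕ) :
    f^[m] y = g^[m] y :=
  agree_iterate hfg m fun j _ e => h ⟨j, e⟩
lemma reach_transfer_of_not (hfg : ∀ z, z ≠ x → f z = g z) (h : ¬ Reaches f y x) :
    Reaches f y b ↔ Reaches g y b :=
  exists_congr fun k => by rw [not_reach_x_eq hfg h k]
lemma reach_untransfer (hfg : ∀ z, z ≠ x → f z = g z) (har : Reaches g a r)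
    (hxr : ¬ Reaches g x r) : Reaches f a r := by
  rcases har with ⟨k, hk⟩
  by_cases hall : ∀ j, j < k → g^[j] a ≠ x
  · exact ⟨k, by rw [← agree_iterate (fun z hz => (hfg z hz).symm) k hall]; exact hk⟩
  · push_neg at hall
    obtain ⟨j, hj, hjx⟩ := hall
    exfalso
    refine hxr ⟨k - j, ?_⟩
    rw [← hjx, ← Function.iterate_add_apply, Nat.sub_add_cancel hj.le]
    exact hk
lemma reach_F9 (hfg : ∀ z, z ≠ x → f z = g z) (hc : Reaches f (f x) x)
    (hr : Reaches f x r) : Reaches g (f x) r := by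
  rcases hr with ⟨i, hi⟩
  induction i using Nat.strong_induction_on with
  | _ i IH =>
    cases i with
    | zero => exact hi ▸ reach_x_transfer hfg hc
    | succ i' =>
      rw [Function.iterate_succ_apply] at hi
      by_cases hall : ∀ j, j < i' → f^[j] (f x) ≠ x
      · exact ⟨i', by rw [← agree_iterate hfg i' hall]; exact hi⟩
      · push_neg at hall
        obtain ⟨j, hj, hjx⟩ := hall
        refine IH (i' - j) (by omega) ?_
        have : f^[i'] (f x) = f^[i' - j] (f^[j] (f x)) := by
          rw [← Function.iterate_add_apply, Nat.sub_add_cancel hj.le]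
        rw [this, hjx] at hi
        exact hi
end Toolkit

/-! ### The core counting identity -/

noncomputable def pcnt (p : Prop) : ℝ := if p then 1 else 0
lemma pcnt_iff {p q : Prop} (h : p ↔ q) : pcnt p = pcnt q := by
  unfold pcnt; exact if_congr h rfl rfl
lemma pcnt_false {p : Prop} (h : ¬ p) : pcnt p = 0 := if_neg h
lemma pcnt_true {p : Prop} (h : p) : pcnt p = 1 := if_pos h

def HAp (h : V → V) (v r : V) : Prop := ∀ y, Reaches h y v ∨ Reaches h y r
def AllVp (h : V → V) (v : V) : Prop := ∀ y, Reaches h y v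

section Core
variable {x v w r : V} {h : V → V}

lemma agree_update (h : V → V) (x w : V) :
    ∀ z, z ≠ x → h z = Function.update h x w z :=
  fun z hz => (Function.update_of_ne hz w h).symm

lemma cyc_of_c (hc : Reaches h (h x) x) : ∃ p, 0 < p ∧ h^[p] x = x := by
  rcases hc with ⟨k, hk⟩
  exact ⟨k + 1, Nat.succ_pos k, by rw [Function.iterate_succ_apply]; exact hk⟩

lemma not_reach_v_of_cyc (hxv : x ≠ v) (hv : h v = v)
    (hcyc : ∃ p, 0 < p ∧ h^[p] x = x) : ¬ Reaches h x v := by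
  rintro ⟨k, hk⟩
  rcases hcyc with ⟨p, hp0, hp⟩
  exact hxv (fixpt_reach hv hp0 hp hk)

lemma HA_fwd (hd : ¬ Reaches h w x) (hHA : HAp h v r) :
    HAp (Function.update h x w) v r := by
  intro y
  set h' := Function.update h x w with hh'
  have agree := agree_update h x w
  by_cases hyx : Reaches h' y x
  · have hw' : Reaches h' x v ∨ Reaches h' x r := by
      rcases hHA w with hwv | hwr
      · left; apply reach_step; rw [hh', Function.update_self]
        exact (reach_transfer_of_not agree hd).mp hwv
      · right; apply reach_step; rw [hh', Function.update_self]
        exact (reach_transfer_of_not agree hd).mp hwr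
    rcases hw' with h1 | h1
    · exact Or.inl (reach_trans hyx h1)
    · exact Or.inr (reach_trans hyx h1)
  · have hyx2 : ¬ Reaches h y x := fun e => hyx (reach_x_transfer agree e)
    rcases hHA y with h1 | h1
    · exact Or.inl ((reach_transfer_of_not agree hyx2).mp h1)
    · exact Or.inr ((reach_transfer_of_not agree hyx2).mp h1)

lemma HA_bwd (hxr : Reaches h x r) (hHA' : HAp (Function.update h x w) v r) :
    HAp h v r := by
  intro y
  have agree := agree_update h x w
  by_cases hyx : Reaches h y x
  · exact Or.inr (reach_trans hyx hxr)
  · rcases hHA' y with h1 | h1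
    · exact Or.inl ((reach_transfer_of_not agree hyx).mpr h1)
    · exact Or.inr ((reach_transfer_of_not agree hyx).mpr h1)

lemma ha_allv_iff (hd : ¬ Reaches h w x) :
    HAp h v x ↔ AllVp (Function.update h x w) v := by
  set h' := Function.update h x w with hh'
  have agree := agree_update h x w
  constructor
  · intro hHA y
    by_cases hyx : Reaches h' y x
    · have hwv : Reaches h w v := (hHA w).resolve_right hd
      have h1 : Reaches h' x v := by
        apply reach_step; rw [hh', Function.update_self]
        exact (reach_transfer_of_not agree hd).mp hwv
      exact reach_trans hyx h1
    · have hyx2 : ¬ Reaches h y x := fun e => hyx (reach_x_transfer agree e)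
      exact (reach_transfer_of_not agree hyx2).mp ((hHA y).resolve_right hyx2)
  · intro hall y
    by_cases hyx : Reaches h y x
    · exact Or.inr hyx
    · exact Or.inl ((reach_transfer_of_not agree hyx).mpr (hall y))

lemma AB'_iff (hc : ¬ Reaches h (h x) x) (hd : ¬ Reaches h w x) (hrx : r ≠ x) :
    (v ≠ r ∧ HAp h v r ∧ Reaches h x r) ↔
      (v ≠ r ∧ HAp (Function.update h x w) v r ∧
        Reaches (Function.update h x w) (h x) r) := by
  have agree := agree_update h x w
  constructor
  · rintro ⟨hvr, hHA, hxr⟩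
    refine ⟨hvr, HA_fwd hd hHA, ?_⟩
    have h1 : Reaches h (h x) r := reach_shift hxr (fun e => hrx e.symm)
    exact (reach_transfer_of_not agree hc).mp h1
  · rintro ⟨hvr, hHA', hhxr⟩
    have h1 : Reaches h (h x) r := (reach_transfer_of_not agree hc).mpr hhxr
    have hxr : Reaches h x r := reach_step h1
    exact ⟨hvr, HA_bwd hxr hHA', hxr⟩

lemma case_cd (hxv : x ≠ v) (hv : h v = v)
    (hc : Reaches h (h x) x) (hd : Reaches h w x) :
    pcnt (v ≠ r ∧ HAp h v r ∧ Reaches h x r)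
      + pcnt (v ≠ r ∧ HAp (Function.update h x w) v r ∧
          Reaches (Function.update h x w) x r)
    = pcnt (v ≠ r ∧ HAp h v r ∧ Reaches h w r)
      + pcnt (r = x ∧ AllVp h v)
      + pcnt (v ≠ r ∧ HAp (Function.update h x w) v r ∧
          Reaches (Function.update h x w) (h x) r)
      + pcnt (r = x ∧ AllVp (Function.update h x w) v) := by
  set h' := Function.update h x w with hh'
  have agree := agree_update h x w
  have hv' : h' v = v := by rw [hh', Function.update_of_ne (Ne.symm hxv) w h]; exact hv
  have hxnv : ¬ Reaches h x v := not_reach_v_of_cyc hxv hv (cyc_of_c hc)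
  have hd' : Reaches h' w x := reach_x_transfer agree hd
  have hcyc' : ∃ p, 0 < p ∧ h'^[p] x = x := by
    rcases hd' with ⟨k, hk⟩
    exact ⟨k + 1, Nat.succ_pos k,
      by rw [Function.iterate_succ_apply, hh', Function.update_self]; exact hk⟩
  have hxnv' : ¬ Reaches h' x v := not_reach_v_of_cyc hxv hv' hcyc'
  have hcT : Reaches h' (h x) x := reach_x_transfer agree hc
  have hAB : (v ≠ r ∧ HAp h v r ∧ Reaches h x r) ↔
      (v ≠ r ∧ HAp h v r ∧ Reaches h w r) := by
    constructor
    · rintro ⟨hvr, hHA, hxr⟩; exact ⟨hvr, hHA, reach_trans hd hxr⟩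
    · rintro ⟨hvr, hHA, _⟩; exact ⟨hvr, hHA, (hHA x).resolve_left hxnv⟩
  have hAB' : (v ≠ r ∧ HAp h' v r ∧ Reaches h' x r) ↔
      (v ≠ r ∧ HAp h' v r ∧ Reaches h' (h x) r) := by
    constructor
    · rintro ⟨hvr, hHA, hxr⟩; exact ⟨hvr, hHA, reach_trans hcT hxr⟩
    · rintro ⟨hvr, hHA, _⟩; exact ⟨hvr, hHA, (hHA x).resolve_left hxnv'⟩
  have hT : ¬ (r = x ∧ AllVp h v) := fun ⟨_, hall⟩ => hxnv (hall x)
  have hT' : ¬ (r = x ∧ AllVp h' v) := fun ⟨_, hall⟩ => hxnv' (hall x)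
  rw [pcnt_iff hAB, pcnt_iff hAB', pcnt_false hT, pcnt_false hT']
  ring

lemma case_cnotd (hxv : x ≠ v) (hv : h v = v)
    (hc : Reaches h (h x) x) (hd : ¬ Reaches h w x) :
    pcnt (v ≠ r ∧ HAp h v r ∧ Reaches h x r)
      + pcnt (v ≠ r ∧ HAp (Function.update h x w) v r ∧
          Reaches (Function.update h x w) x r)
    = pcnt (v ≠ r ∧ HAp h v r ∧ Reaches h w r)
      + pcnt (r = x ∧ AllVp h v)
      + pcnt (v ≠ r ∧ HAp (Function.update h x w) v r ∧
          Reaches (Function.update h x w) (h x) r)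
      + pcnt (r = x ∧ AllVp (Function.update h x w) v) := by
  set h' := Function.update h x w with hh'
  have agree := agree_update h x w
  obtain ⟨p, hp0, hp⟩ := cyc_of_c hc
  have hxnv : ¬ Reaches h x v := not_reach_v_of_cyc hxv hv ⟨p, hp0, hp⟩
  have hcT : Reaches h' (h x) x := reach_x_transfer agree hc
  have hBf : ¬ (v ≠ r ∧ HAp h v r ∧ Reaches h w r) := by
    rintro ⟨hvr, hHA, hwr⟩
    have hxr : Reaches h x r := (hHA x).resolve_left hxnv
    exact hd (reach_trans hwr (cyc_back hp0 hp hxr))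
  have hTf : ¬ (r = x ∧ AllVp h v) := fun ⟨_, hall⟩ => hxnv (hall x)
  by_cases hrx : r = x
  · subst hrx
    have hA : (v ≠ r ∧ HAp h v r ∧ Reaches h r r) ↔ (r = r ∧ AllVp h' v) := by
      constructor
      · rintro ⟨_, hHA, _⟩; exact ⟨rfl, (ha_allv_iff hd).mp hHA⟩
      · rintro ⟨_, hall⟩
        exact ⟨Ne.symm hxv, (ha_allv_iff hd).mpr hall, reach_refl _ _⟩
    have hA' : (v ≠ r ∧ HAp h' v r ∧ Reaches h' r r) ↔
        (v ≠ r ∧ HAp h' v r ∧ Reaches h' (h r) r) := by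
      constructor
      · rintro ⟨hvr, hHA, _⟩; exact ⟨hvr, hHA, hcT⟩
      · rintro ⟨hvr, hHA, _⟩; exact ⟨hvr, hHA, reach_refl _ _⟩
    rw [pcnt_iff hA, pcnt_iff hA', pcnt_false hBf, pcnt_false hTf]
    ring
  · have hT'f : ¬ (r = x ∧ AllVp h' v) := fun ⟨e, _⟩ => hrx e
    have hnAA' : ¬ ((v ≠ r ∧ HAp h v r ∧ Reaches h x r) ∧
        (v ≠ r ∧ HAp h' v r ∧ Reaches h' x r)) := by
      rintro ⟨⟨_, _, hxr⟩, ⟨_, _, hxr'⟩⟩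
      have hwr' : Reaches h' w r := by
        have h1 := reach_shift hxr' (fun e => hrx e.symm)
        rwa [hh', Function.update_self] at h1
      have hrx2 : Reaches h' r x := reach_x_transfer agree (cyc_back hp0 hp hxr)
      exact hd ((reach_x_iff agree).mpr (reach_trans hwr' hrx2))
    have hAB' : (v ≠ r ∧ HAp h v r ∧ Reaches h x r) →
        (v ≠ r ∧ HAp h' v r ∧ Reaches h' (h x) r) := by
      rintro ⟨hvr, hHA, hxr⟩
      exact ⟨hvr, HA_fwd hd hHA, reach_F9 agree hc hxr⟩
    have hA'B' : (v ≠ r ∧ HAp h' v r ∧ Reaches h' x r) →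
        (v ≠ r ∧ HAp h' v r ∧ Reaches h' (h x) r) := by
      rintro ⟨hvr, hHA, hxr⟩
      exact ⟨hvr, hHA, reach_trans hcT hxr⟩
    have hB' : (v ≠ r ∧ HAp h' v r ∧ Reaches h' (h x) r) →
        (v ≠ r ∧ HAp h v r ∧ Reaches h x r) ∨
          (v ≠ r ∧ HAp h' v r ∧ Reaches h' x r) := by
      rintro ⟨hvr, hHA', hhxr⟩
      by_cases hxr' : Reaches h' x r
      · exact Or.inr ⟨hvr, hHA', hxr'⟩
      · have hhxr2 : Reaches h (h x) r := reach_untransfer agree hhxr hxr'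
        have hxr : Reaches h x r := reach_step hhxr2
        exact Or.inl ⟨hvr, HA_bwd hxr hHA', hxr⟩
    rw [pcnt_false hBf, pcnt_false hTf, pcnt_false hT'f]
    by_cases hA : (v ≠ r ∧ HAp h v r ∧ Reaches h x r)
    · have hB'h := hAB' hA
      have hnA' : ¬ (v ≠ r ∧ HAp h' v r ∧ Reaches h' x r) := fun e => hnAA' ⟨hA, e⟩
      rw [pcnt_true hA, pcnt_true hB'h, pcnt_false hnA']; ring
    · by_cases hA' : (v ≠ r ∧ HAp h' v r ∧ Reaches h' x r)
      · rw [pcnt_false hA, pcnt_true hA', pcnt_true (hA'B' hA')]; ring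
      · have hnB' : ¬ (v ≠ r ∧ HAp h' v r ∧ Reaches h' (h x) r) :=
          fun e => (hB' e).elim hA hA'
        rw [pcnt_false hA, pcnt_false hA', pcnt_false hnB']; ring

lemma core_reach (hxv : x ≠ v) (hv : h v = v) :
    pcnt (v ≠ r ∧ HAp h v r ∧ Reaches h x r)
      + pcnt (v ≠ r ∧ HAp (Function.update h x w) v r ∧
          Reaches (Function.update h x w) x r)
    = pcnt (v ≠ r ∧ HAp h v r ∧ Reaches h w r)
      + pcnt (r = x ∧ AllVp h v)
      + pcnt (v ≠ r ∧ HAp (Function.update h x w) v r ∧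
          Reaches (Function.update h x w) (h x) r)
      + pcnt (r = x ∧ AllVp (Function.update h x w) v) := by
  have agree := agree_update h x w
  have hv' : (Function.update h x w) v = v := by
    rw [Function.update_of_ne (Ne.symm hxv) w h]; exact hv
  have hback : Function.update (Function.update h x w) x (h x) = h := by
    rw [Function.update_idem, Function.update_eq_self]
  by_cases hc : Reaches h (h x) x <;> by_cases hd : Reaches h w x
  · exact case_cd hxv hv hc hd
  · exact case_cnotd hxv hv hc hd
  · -- ¬c, d : apply case_cnotd to the swapped pair
    have hc2 : Reaches (Function.update h x w) ((Function.update h x w) x) x := by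
      rw [Function.update_self]; exact reach_x_transfer agree hd
    have hd2 : ¬ Reaches (Function.update h x w) (h x) x :=
      fun e => hc ((reach_x_iff agree).mpr e)
    have key := case_cnotd (x := x) (v := v) (h := Function.update h x w)
      (w := h x) (r := r) hxv hv' hc2 hd2
    rw [hback, Function.update_self] at key
    linarith
  · -- ¬c, ¬d
    have hc2 : ¬ Reaches (Function.update h x w) ((Function.update h x w) x) x := by
      rw [Function.update_self]; exact fun e => hd ((reach_x_iff agree).mpr e)
    have hd2 : ¬ Reaches (Function.update h x w) (h x) x :=
      fun e => hc ((reach_x_iff agree).mpr e)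
    by_cases hrx : r = x
    · subst hrx
      have hA : (v ≠ r ∧ HAp h v r ∧ Reaches h r r) ↔
          (r = r ∧ AllVp (Function.update h r w) v) := by
        constructor
        · rintro ⟨_, hHA, _⟩; exact ⟨rfl, (ha_allv_iff hd).mp hHA⟩
        · rintro ⟨_, hall⟩
          exact ⟨Ne.symm hxv, (ha_allv_iff hd).mpr hall, reach_refl _ _⟩
      have hA'pre := ha_allv_iff (h := Function.update h r w) (w := h r)
        (x := r) (v := v) hd2
      rw [hback] at hA'pre
      have hA' : (v ≠ r ∧ HAp (Function.update h r w) v r ∧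
          Reaches (Function.update h r w) r r) ↔ (r = r ∧ AllVp h v) := by
        constructor
        · rintro ⟨_, hHA, _⟩; exact ⟨rfl, hA'pre.mp hHA⟩
        · rintro ⟨_, hall⟩
          exact ⟨Ne.symm hxv, hA'pre.mpr hall, reach_refl _ _⟩
      have hBf : ¬ (v ≠ r ∧ HAp h v r ∧ Reaches h w r) := fun ⟨_, _, e⟩ => hd e
      have hB'f : ¬ (v ≠ r ∧ HAp (Function.update h r w) v r ∧
          Reaches (Function.update h r w) (h r) r) := fun ⟨_, _, e⟩ => hd2 e
      rw [pcnt_iff hA, pcnt_iff hA', pcnt_false hBf, pcnt_false hB'f]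
      ring
    · have hAB' := AB'_iff (v := v) (w := w) hc hd hrx
      have hA'Bpre := AB'_iff (v := v) (h := Function.update h x w) (w := h x)
        (r := r) (x := x) (by rw [Function.update_self] at hc2 ⊢; exact hc2) hd2 hrx
      rw [hback, Function.update_self] at hA'Bpre
      have hTf : ¬ (r = x ∧ AllVp h v) := fun ⟨e, _⟩ => hrx e
      have hT'f : ¬ (r = x ∧ AllVp (Function.update h x w) v) := fun ⟨e, _⟩ => hrx e
      rw [pcnt_iff hAB', pcnt_iff hA'Bpre, pcnt_false hTf, pcnt_false hT'f]
      ring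
end Core

section Bridge

variable {ω : V → V → ℝ} {v r x w : V} {h : V → V}

lemma isForest2_cut_iff :
    IsForest2 ω v r (Function.update h r r) ↔
      (v ≠ r ∧ h v = v ∧ (∀ z, z ≠ v → z ≠ r → 0 < ω z (h z)) ∧ HAp h v r) := by
  have agree : ∀ z, z ≠ r → h z = Function.update h r r z := agree_update h r r
  constructor
  · rintro ⟨hvr, hfv, -, hpos, hre⟩
    rw [Function.update_of_ne hvr r h] at hfv
    refine ⟨hvr, hfv, fun z hz1 hz2 => ?_, fun y => ?_⟩
    · have h2 := hpos z hz1 hz2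
      rwa [Function.update_of_ne hz2 r h] at h2
    · rcases hre y with h1 | h1
      · by_cases hyr : Reaches h y r
        · exact Or.inr hyr
        · exact Or.inl ((reach_transfer_of_not agree hyr).mpr h1)
      · exact Or.inr ((reach_x_iff agree).mpr h1)
  · rintro ⟨hvr, hv, hpos, hHA⟩
    refine ⟨hvr, ?_, Function.update_self r r h, fun z hz1 hz2 => ?_, fun y => ?_⟩
    · rw [Function.update_of_ne hvr r h]; exact hv
    · rw [Function.update_of_ne hz2 r h]; exact hpos z hz1 hz2
    · rcases hHA y with h1 | h1
      · by_cases hyr : Reaches h y r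
        · exact Or.inr ((reach_x_iff agree).mp hyr)
        · exact Or.inl ((reach_transfer_of_not agree hyr).mp h1)
      · exact Or.inr ((reach_x_iff agree).mp h1)

lemma foR_iff (hv : h v = v) (hpos : ∀ z, z ≠ v → 0 < ω z (h z)) :
    IsForest2 ω v r (Function.update h r r) ↔ (v ≠ r ∧ HAp h v r) := by
  rw [isForest2_cut_iff]
  exact ⟨fun ⟨a, _, _, d⟩ => ⟨a, d⟩,
    fun ⟨a, d⟩ => ⟨a, hv, fun z hz1 _ => hpos z hz1, d⟩⟩

lemma tree_iff (hv : h v = v) (hpos : ∀ z, z ≠ v → 0 < ω z (h z)) :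
    IsInTree ω v h ↔ AllVp h v :=
  ⟨fun ⟨_, _, c⟩ => c, fun c => ⟨hv, fun z hz => hpos z hz, c⟩⟩

lemma core_count (hnn : ∀ a b, 0 ≤ ω a b) (hxv : x ≠ v) (hw : 0 < ω x w)
    (hpos : ∀ z, z ≠ v → 0 < ω z (h z)) :
    pcnt (IsForest2 ω v r (Function.update h r r) ∧ Reaches h x r)
      + pcnt (IsForest2 ω v r
            (Function.update (Function.update h x w) r r) ∧
          Reaches (Function.update h x w) x r)
    = pcnt (IsForest2 ω v r (Function.update h r r) ∧ Reaches h w r)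
      + pcnt (r = x ∧ IsInTree ω v h)
      + pcnt (IsForest2 ω v r
            (Function.update (Function.update h x w) r r) ∧
          Reaches (Function.update h x w) (h x) r)
      + pcnt (r = x ∧ IsInTree ω v (Function.update h x w)) := by
  have hpos' : ∀ z, z ≠ v → 0 < ω z (Function.update h x w z) := by
    intro z hz
    by_cases hzx : z = x
    · subst hzx; rw [Function.update_self]; exact hw
    · rw [Function.update_of_ne hzx w h]; exact hpos z hz
  by_cases hv : h v = v
  · have hv' : (Function.update h x w) v = v := by
      rw [Function.update_of_ne (Ne.symm hxv) w h]; exact hv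
    have e1 : (IsForest2 ω v r (Function.update h r r) ∧ Reaches h x r) ↔
        (v ≠ r ∧ HAp h v r ∧ Reaches h x r) := by
      rw [foR_iff hv hpos]; exact and_assoc
    have e2 : (IsForest2 ω v r (Function.update (Function.update h x w) r r) ∧
          Reaches (Function.update h x w) x r) ↔
        (v ≠ r ∧ HAp (Function.update h x w) v r ∧
          Reaches (Function.update h x w) x r) := by
      rw [foR_iff hv' hpos']; exact and_assoc
    have e3 : (IsForest2 ω v r (Function.update h r r) ∧ Reaches h w r) ↔
        (v ≠ r ∧ HAp h v r ∧ Reaches h w r) := by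
      rw [foR_iff hv hpos]; exact and_assoc
    have e4 : (r = x ∧ IsInTree ω v h) ↔ (r = x ∧ AllVp h v) := by
      rw [tree_iff hv hpos]
    have e5 : (IsForest2 ω v r (Function.update (Function.update h x w) r r) ∧
          Reaches (Function.update h x w) (h x) r) ↔
        (v ≠ r ∧ HAp (Function.update h x w) v r ∧
          Reaches (Function.update h x w) (h x) r) := by
      rw [foR_iff hv' hpos']; exact and_assoc
    have e6 : (r = x ∧ IsInTree ω v (Function.update h x w)) ↔
        (r = x ∧ AllVp (Function.update h x w) v) := by
      rw [tree_iff hv' hpos']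
    rw [pcnt_iff e1, pcnt_iff e2, pcnt_iff e3, pcnt_iff e4, pcnt_iff e5, pcnt_iff e6]
    exact core_reach hxv hv
  · have f1 : ¬ (IsForest2 ω v r (Function.update h r r) ∧ Reaches h x r) := by
      rintro ⟨hf, -⟩
      exact hv (isForest2_cut_iff.mp hf).2.1
    have hvne : (Function.update h x w) v = h v := Function.update_of_ne (Ne.symm hxv) w h
    have f2 : ¬ (IsForest2 ω v r (Function.update (Function.update h x w) r r) ∧
        Reaches (Function.update h x w) x r) := by
      rintro ⟨hf, -⟩
      have := (isForest2_cut_iff.mp hf).2.1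
      rw [hvne] at this; exact hv this
    have f3 : ¬ (IsForest2 ω v r (Function.update h r r) ∧ Reaches h w r) := by
      rintro ⟨hf, -⟩
      exact hv (isForest2_cut_iff.mp hf).2.1
    have f4 : ¬ (r = x ∧ IsInTree ω v h) := by
      rintro ⟨-, ht, -⟩; exact hv ht
    have f5 : ¬ (IsForest2 ω v r (Function.update (Function.update h x w) r r) ∧
        Reaches (Function.update h x w) (h x) r) := by
      rintro ⟨hf, -⟩
      have := (isForest2_cut_iff.mp hf).2.1
      rw [hvne] at this; exact hv this
    have f6 : ¬ (r = x ∧ IsInTree ω v (Function.update h x w)) := by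
      rintro ⟨-, ht, -⟩
      rw [hvne] at ht; exact hv ht
    rw [pcnt_false f1, pcnt_false f2, pcnt_false f3, pcnt_false f4,
      pcnt_false f5, pcnt_false f6]
    ring

end Bridge

section Sums

variable {ω : V → V → ℝ} {v u x : V}

lemma update_self_of {f : V → V} {a b : V} (h : f a = b) :
    Function.update f a b = f := Function.update_eq_self_iff.mpr h.symm

/-- `Φ(y)`: weighted enumeration (with root-degree factor, in merged `h`-form)
of 2-forests with roots `v`,`r` such that `y` lies in the component of `r`. -/
noncomputable def Phi (ω : V → V → ℝ) (v y : V) : ℝ :=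
  ∑ r : V, ∑ h ∈ Finset.univ.filter (fun h : V → V =>
    IsForest2 ω v r (Function.update h r r) ∧ Reaches h y r), treeWeight ω v h

lemma sum_pcnt_filter {α : Type*} [Fintype α] (P : α → Prop) (f : α → ℝ) :
    ∑ a : α, f a * pcnt (P a) = ∑ a ∈ Finset.univ.filter P, f a := by
  rw [Finset.sum_filter]
  refine Finset.sum_congr rfl fun a _ => ?_
  by_cases h : P a
  · rw [pcnt_true h, if_pos h, mul_one]
  · rw [pcnt_false h, if_neg h, mul_zero]

lemma pcnt_and (p q : Prop) : pcnt (p ∧ q) = pcnt p * pcnt q := by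
  by_cases hp : p <;> by_cases hq : q <;>
    simp [pcnt_true, pcnt_false, hp, hq, pcnt, *]

/-- Expanding the degree of the root of a forest as a sum over an added edge. -/
lemma forest_root_expand (r y : V) :
    ∑ g ∈ Finset.univ.filter (fun g : V → V =>
        IsForest2 ω v r g ∧ Reaches g y r), deg ω r * forestWeight ω v r g
    = ∑ h ∈ Finset.univ.filter (fun h : V → V =>
        IsForest2 ω v r (Function.update h r r) ∧ Reaches h y r),
          treeWeight ω v h := by
  have step1 : ∀ g : V → V, deg ω r * forestWeight ω v r g
      = ∑ s : V, ω r s * forestWeight ω v r g := by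
    intro g; rw [deg, Finset.sum_mul]
  simp_rw [step1]
  rw [← Finset.sum_product']
  refine Finset.sum_nbij' (fun p => Function.update p.1 r p.2)
    (fun h => (Function.update h r r, h r)) ?_ ?_ ?_ ?_ ?_
  · rintro ⟨g, s⟩ hmem
    dsimp only
    rw [Finset.mem_product, Finset.mem_filter] at hmem
    obtain ⟨⟨-, hg, hre⟩, -⟩ := hmem
    have hgr : g r = r := hg.2.2.1
    have hcut : Function.update (Function.update g r s) r r = g := by
      rw [Function.update_idem]; exact update_self_of hgr
    rw [Finset.mem_filter]
    refine ⟨Finset.mem_univ _, ?_, ?_⟩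
    · rw [hcut]; exact hg
    · exact (reach_x_iff (agree_update g r s)).mp hre
  · intro h hmem
    rw [Finset.mem_filter] at hmem
    obtain ⟨-, hg, hre⟩ := hmem
    rw [Finset.mem_product, Finset.mem_filter]
    refine ⟨⟨Finset.mem_univ _, by dsimp only; exact hg, ?_⟩,
      Finset.mem_univ _⟩
    exact (reach_x_iff (agree_update h r r)).mp hre
  · rintro ⟨g, s⟩ hmem
    dsimp only
    rw [Finset.mem_product, Finset.mem_filter] at hmem
    obtain ⟨⟨-, hg, -⟩, -⟩ := hmem
    have hgr : g r = r := hg.2.2.1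
    have h1 : Function.update (Function.update g r s) r r = g := by
      rw [Function.update_idem]; exact update_self_of hgr
    rw [Function.update_self, h1]
  · intro h hmem
    dsimp only
    rw [Function.update_idem, Function.update_eq_self]
  · rintro ⟨g, s⟩ hmem
    dsimp only
    rw [Finset.mem_product, Finset.mem_filter] at hmem
    obtain ⟨⟨-, hg, -⟩, -⟩ := hmem
    have hrv : r ≠ v := Ne.symm hg.1
    have hmem2 : r ∈ Finset.univ.erase v := Finset.mem_erase.mpr ⟨hrv, Finset.mem_univ r⟩
    rw [treeWeight, ← Finset.mul_prod_erase _ _ hmem2, Function.update_self]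
    rw [forestWeight]
    congr 1
    refine Finset.prod_congr rfl fun z hz => ?_
    have hzr : z ≠ r := (Finset.mem_erase.mp hz).1
    rw [Function.update_of_ne hzr s g]

/-- Cutting the edge `(v,u)` out of an in-tree gives a 2-forest. -/
lemma tree_cut_edge (he : 0 < ω v u) (r : V) :
    ∑ f ∈ Finset.univ.filter (fun f : V → V =>
        IsInTree ω r f ∧ v ≠ r ∧ f v = u), deg ω r * treeWeight ω r f
    = ω v u * ∑ g ∈ Finset.univ.filter (fun g : V → V =>
        IsForest2 ω v r g ∧ Reaches g u r), deg ω r * forestWeight ω v r g := by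
  rw [Finset.mul_sum]
  refine Finset.sum_nbij' (fun f => Function.update f v v)
    (fun g => Function.update g v u) ?_ ?_ ?_ ?_ ?_
  · intro f hmem
    rw [Finset.mem_filter] at hmem
    obtain ⟨-, ⟨hfr, hfpos, hfre⟩, hvr, hfv⟩ := hmem
    have agree := agree_update f v v
    have hnuv : ¬ Reaches f u v := by
      rintro ⟨k, hk⟩
      have hcyc : f^[k + 1] u = u := by
        rw [Function.iterate_succ_apply', hk, hfv]
      obtain ⟨m, hm⟩ := hfre u
      have hur : u = r := fixpt_reach hfr (Nat.succ_pos k) hcyc hm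
      have h3 : f^[k] r = r := Function.iterate_fixed hfr k
      rw [hur, h3] at hk
      exact hvr hk.symm
    rw [Finset.mem_filter]
    refine ⟨Finset.mem_univ _, ⟨hvr, Function.update_self v v f, ?_, ?_, ?_⟩, ?_⟩
    · rw [Function.update_of_ne (Ne.symm hvr) v f]; exact hfr
    · intro z hz1 hz2
      rw [Function.update_of_ne hz1 v f]
      exact hfpos z hz2
    · intro y
      by_cases hyv : Reaches f y v
      · exact Or.inl ((reach_x_iff agree).mp hyv)
      · exact Or.inr ((reach_transfer_of_not agree hyv).mp (hfre y))
    · rw [← hfv] at hnuv ⊢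
      exact (reach_transfer_of_not agree hnuv).mp (hfre (f v))
  · intro g hmem
    rw [Finset.mem_filter] at hmem
    obtain ⟨-, ⟨hvr, hgv, hgr, hgpos, hgre⟩, hgur⟩ := hmem
    have agree := agree_update g v u
    have hnuv : ¬ Reaches g u v := by
      intro e
      rcases reach_total e hgur with h1 | h1
      · exact hvr (reach_fixed hgv h1).symm
      · exact hvr (reach_fixed hgr h1)
    have hfur : Reaches (Function.update g v u) u r :=
      (reach_transfer_of_not agree hnuv).mp hgur
    have hfvr : Reaches (Function.update g v u) v r := by
      apply reach_step
      rw [Function.update_self]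
      exact hfur
    rw [Finset.mem_filter]
    refine ⟨Finset.mem_univ _, ⟨?_, ?_, ?_⟩, hvr, Function.update_self v u g⟩
    · rw [Function.update_of_ne (Ne.symm hvr) u g]; exact hgr
    · intro z hz
      by_cases hzv : z = v
      · subst hzv; rw [Function.update_self]; exact he
      · rw [Function.update_of_ne hzv u g]
        exact hgpos z hzv hz
    · intro y
      by_cases hyv : Reaches g y v
      · exact reach_trans ((reach_x_iff agree).mp hyv) hfvr
      · exact (reach_transfer_of_not agree hyv).mp ((hgre y).resolve_left hyv)
  · intro f hmem
    rw [Finset.mem_filter] at hmem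
    obtain ⟨-, -, -, hfv⟩ := hmem
    rw [Function.update_idem]
    exact update_self_of hfv
  · intro g hmem
    rw [Finset.mem_filter] at hmem
    obtain ⟨-, ⟨-, hgv, -⟩, -⟩ := hmem
    rw [Function.update_idem]
    exact update_self_of hgv
  · intro f hmem
    rw [Finset.mem_filter] at hmem
    obtain ⟨-, -, hvr, hfv⟩ := hmem
    have hmem2 : v ∈ Finset.univ.erase r := Finset.mem_erase.mpr ⟨hvr, Finset.mem_univ v⟩
    rw [treeWeight, ← Finset.mul_prod_erase _ _ hmem2, hfv, forestWeight]
    have hset : ((Finset.univ.erase r).erase v : Finset V)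
        = (Finset.univ.erase v).erase r := Finset.erase_right_comm
    rw [hset]
    have h4 : ∏ z ∈ (Finset.univ.erase v).erase r, ω z (Function.update f v v z)
        = ∏ z ∈ (Finset.univ.erase v).erase r, ω z (f z) := by
      refine Finset.prod_congr rfl fun z hz => ?_
      have hzv : z ≠ v := by
        have h8 := Finset.mem_erase.mp hz
        exact (Finset.mem_erase.mp h8.2).1
      rw [Function.update_of_ne hzv v f]
    rw [h4]
    ring

lemma phi_at_v : Phi ω v v = 0 := by
  refine Finset.sum_eq_zero fun r _ => Finset.sum_eq_zero fun h hmem => ?_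
  exfalso
  rw [Finset.mem_filter] at hmem
  obtain ⟨-, hf, hre⟩ := hmem
  obtain ⟨hvr, hv, -, -⟩ := isForest2_cut_iff.mp hf
  exact hvr (reach_fixed hv hre).symm

lemma sum3_A (hxv : x ≠ v) :
    ∑ p : V × V × (V → V), (ω x p.1 * treeWeight ω v p.2.2) *
      pcnt (IsForest2 ω v p.2.1 (Function.update p.2.2 p.2.1 p.2.1) ∧
        Reaches p.2.2 x p.2.1)
    = deg ω x * Phi ω v x := by
  rw [Fintype.sum_prod_type]
  have key : ∀ w : V, (∑ q : V × (V → V), (ω x w * treeWeight ω v q.2) *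
      pcnt (IsForest2 ω v q.1 (Function.update q.2 q.1 q.1) ∧ Reaches q.2 x q.1))
      = ω x w * Phi ω v x := by
    intro w
    rw [Fintype.sum_prod_type, Phi, Finset.mul_sum]
    refine Finset.sum_congr rfl fun r _ => ?_
    dsimp only
    rw [Finset.mul_sum, Finset.sum_filter]
    refine Finset.sum_congr rfl fun h _ => ?_
    by_cases hP : IsForest2 ω v r (Function.update h r r) ∧ Reaches h x r
    · rw [pcnt_true hP, if_pos hP, mul_one]
    · rw [pcnt_false hP, if_neg hP, mul_zero]
  simp_rw [key]
  rw [← Finset.sum_mul]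
  rfl

lemma sum3_B (hxv : x ≠ v) :
    ∑ p : V × V × (V → V), (ω x p.1 * treeWeight ω v p.2.2) *
      pcnt (IsForest2 ω v p.2.1 (Function.update p.2.2 p.2.1 p.2.1) ∧
        Reaches p.2.2 p.1 p.2.1)
    = ∑ w : V, ω x w * Phi ω v w := by
  rw [Fintype.sum_prod_type]
  refine Finset.sum_congr rfl fun w _ => ?_
  rw [Fintype.sum_prod_type, Phi, Finset.mul_sum]
  refine Finset.sum_congr rfl fun r _ => ?_
  dsimp only
  rw [Finset.mul_sum, Finset.sum_filter]
  refine Finset.sum_congr rfl fun h _ => ?_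
  by_cases hP : IsForest2 ω v r (Function.update h r r) ∧ Reaches h w r
  · rw [pcnt_true hP, if_pos hP, mul_one]
  · rw [pcnt_false hP, if_neg hP, mul_zero]

lemma sum3_T (hxv : x ≠ v) :
    ∑ p : V × V × (V → V), (ω x p.1 * treeWeight ω v p.2.2) *
      pcnt (p.2.1 = x ∧ IsInTree ω v p.2.2)
    = deg ω x * tau ω v := by
  rw [Fintype.sum_prod_type]
  have key : ∀ w : V, (∑ q : V × (V → V), (ω x w * treeWeight ω v q.2) *
      pcnt (q.1 = x ∧ IsInTree ω v q.2)) = ω x w * tau ω v := by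
    intro w
    rw [Fintype.sum_prod_type]
    have inner : ∀ r : V, (∑ h : V → V, (ω x w * treeWeight ω v h) *
        pcnt (r = x ∧ IsInTree ω v h))
        = if r = x then ω x w * tau ω v else 0 := by
      intro r
      by_cases hr : r = x
      · rw [if_pos hr]
        have h5 : ∀ h : V → V, (ω x w * treeWeight ω v h) *
            pcnt (r = x ∧ IsInTree ω v h)
            = (ω x w * treeWeight ω v h) * pcnt (IsInTree ω v h) := by
          intro h
          rw [pcnt_and, pcnt_true hr, one_mul]
        simp_rw [h5]
        rw [tau, Finset.mul_sum, Finset.sum_filter]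
        refine Finset.sum_congr rfl fun h _ => ?_
        by_cases hP : IsInTree ω v h
        · rw [pcnt_true hP, if_pos hP, mul_one]
        · rw [pcnt_false hP, if_neg hP, mul_zero]
      · rw [if_neg hr]
        refine Finset.sum_eq_zero fun h _ => ?_
        rw [pcnt_false (fun e => hr e.1), mul_zero]
    have inner2 : ∀ r : V, (∑ h : V → V, (ω x w * treeWeight ω v ((r, h) : V × (V → V)).2) *
        pcnt (((r, h) : V × (V → V)).1 = x ∧ IsInTree ω v ((r, h) : V × (V → V)).2))
        = if r = x then ω x w * tau ω v else 0 := inner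
    rw [Finset.sum_congr rfl fun r _ => inner2 r]
    simp
  simp_rw [key]
  rw [← Finset.sum_mul]
  rfl

lemma phi_rec (hnn : ∀ a b, 0 ≤ ω a b) (hxv : x ≠ v) :
    deg ω x * Phi ω v x = deg ω x * tau ω v + ∑ w : V, ω x w * Phi ω v w := by
  set F : V × V × (V → V) → ℝ := fun p =>
    (ω x p.1 * treeWeight ω v p.2.2) *
      (pcnt (IsForest2 ω v p.2.1 (Function.update p.2.2 p.2.1 p.2.1) ∧
          Reaches p.2.2 x p.2.1)
        - pcnt (IsForest2 ω v p.2.1 (Function.update p.2.2 p.2.1 p.2.1) ∧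
          Reaches p.2.2 p.1 p.2.1)
        - pcnt (p.2.1 = x ∧ IsInTree ω v p.2.2)) with hF
  have hsplit : ∑ p : V × V × (V → V), F p
      = deg ω x * Phi ω v x - (∑ w : V, ω x w * Phi ω v w)
        - deg ω x * tau ω v := by
    rw [← sum3_A (ω := ω) hxv, ← sum3_B (ω := ω) hxv, ← sum3_T (ω := ω) hxv]
    rw [← Finset.sum_sub_distrib, ← Finset.sum_sub_distrib]
    refine Finset.sum_congr rfl fun p _ => ?_
    simp only [hF]
    ring
  have wkey : ∀ (w : V) (h : V → V), ω x w * treeWeight ω v h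
      = ω x (h x) * treeWeight ω v (Function.update h x w) := by
    intro w h
    have hmem2 : x ∈ Finset.univ.erase v := Finset.mem_erase.mpr ⟨hxv, Finset.mem_univ x⟩
    rw [treeWeight, treeWeight, ← Finset.mul_prod_erase _ _ hmem2,
      ← Finset.mul_prod_erase _ (fun z => ω z (Function.update h x w z)) hmem2,
      Function.update_self]
    have h6 : ∏ z ∈ (Finset.univ.erase v).erase x, ω z (Function.update h x w z)
        = ∏ z ∈ (Finset.univ.erase v).erase x, ω z (h z) := by
      refine Finset.prod_congr rfl fun z hz => ?_
      rw [Function.update_of_ne (Finset.mem_erase.mp hz).1 w h]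
    rw [h6]
    ring
  have hpair : ∀ (w r : V) (h : V → V),
      F (w, r, h) + F (h x, r, Function.update h x w) = 0 := by
    intro w r h
    by_cases hz : ω x w * treeWeight ω v h = 0
    · have hz2 : ω x (h x) * treeWeight ω v (Function.update h x w) = 0 := by
        rw [← wkey]; exact hz
      simp only [hF]
      rw [hz, hz2]
      ring
    · have hw0 : 0 < ω x w := by
        rcases mul_ne_zero_iff.mp hz with ⟨h1, -⟩
        exact lt_of_le_of_ne (hnn x w) (Ne.symm h1)
      have hpos : ∀ z, z ≠ v → 0 < ω z (h z) := by
        intro z hzv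
        rcases mul_ne_zero_iff.mp hz with ⟨-, h2⟩
        rw [treeWeight] at h2
        have h7 := Finset.prod_ne_zero_iff.mp h2 z
          (Finset.mem_erase.mpr ⟨hzv, Finset.mem_univ z⟩)
        exact lt_of_le_of_ne (hnn z (h z)) (Ne.symm h7)
      have core := core_count (ω := ω) (v := v) (x := x) (w := w) (r := r)
        (h := h) hnn hxv hw0 hpos
      have expand : F (w, r, h) + F (h x, r, Function.update h x w)
          = (ω x w * treeWeight ω v h) *
            ((pcnt (IsForest2 ω v r (Function.update h r r) ∧ Reaches h x r)
              + pcnt (IsForest2 ω v r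
                    (Function.update (Function.update h x w) r r) ∧
                  Reaches (Function.update h x w) x r))
            - (pcnt (IsForest2 ω v r (Function.update h r r) ∧ Reaches h w r)
              + pcnt (r = x ∧ IsInTree ω v h)
              + pcnt (IsForest2 ω v r
                    (Function.update (Function.update h x w) r r) ∧
                  Reaches (Function.update h x w) (h x) r)
              + pcnt (r = x ∧ IsInTree ω v (Function.update h x w)))) := by
        simp only [hF]
        rw [← wkey]
        ring
      rw [expand, core]
      ring
  have hzero : ∑ p : V × V × (V → V), F p = 0 := by
    apply Finset.sum_involution
      (g := fun p _ => ((p.2.2 x, p.2.1, Function.update p.2.2 x p.1) : V × V × (V → V)))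
    · rintro ⟨w, r, h⟩ -
      exact hpair w r h
    · rintro ⟨w, r, h⟩ - hFne heq
      apply hFne
      have h2 := hpair w r h
      rw [show ((h x, r, Function.update h x w) : V × V × (V → V)) = (w, r, h)
        from heq] at h2
      linarith
    · rintro ⟨w, r, h⟩ -
      exact Finset.mem_univ _
    · rintro ⟨w, r, h⟩ -
      show ((Function.update h x w) x, r,
          Function.update (Function.update h x w) x (h x)) = (w, r, h)
      rw [Function.update_self, Function.update_idem, Function.update_eq_self]
  rw [hsplit] at hzero
  linarith

end Sums

section Analysis

variable {ω : V → V → ℝ} {v u : V}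

lemma deg_pos_of (hnn : ∀ a b, 0 ≤ ω a b) (hsc : StronglyConnected ω)
    (hab : ∃ a b : V, a ≠ b) : ∀ x : V, 0 < deg ω x := by
  intro x
  obtain ⟨a, b, hab⟩ := hab
  have ht : ∃ t : V, t ≠ x := by
    rcases eq_or_ne x a with rfl | hxa
    · exact ⟨b, Ne.symm hab⟩
    · exact ⟨a, Ne.symm hxa⟩
  obtain ⟨t, htx⟩ := ht
  rcases (hsc x t).cases_head with heq | ⟨c, hxc, -⟩
  · exact absurd heq.symm htx
  · calc (0 : ℝ) < ω x c := hxc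
      _ ≤ deg ω x := Finset.single_le_sum (fun i _ => hnn x i) (Finset.mem_univ c)

/-- `n`-step reachability of `v` along positive-weight edges. -/
def reachN (ω : V → V → ℝ) (v : V) : ℕ → V → Prop
  | 0, z => z = v
  | (n + 1), z => z = v ∨ ∃ y, 0 < ω z y ∧ reachN ω v n y

lemma reachN_exists (hsc : StronglyConnected ω) (z : V) :
    ∃ n, reachN ω v n z := by
  have h := hsc z v
  induction h using Relation.ReflTransGen.head_induction_on with
  | refl => exact ⟨0, rfl⟩
  | head hst _ ih =>
      obtain ⟨n, hn⟩ := ih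
      exact ⟨n + 1, Or.inr ⟨_, hst, hn⟩⟩

lemma tree_exists (hsc : StronglyConnected ω) :
    ∃ f : V → V, IsInTree ω v f ∧ 0 < treeWeight ω v f := by
  have hex : ∀ z : V, ∃ n, reachN ω v n z := fun z => reachN_exists hsc z
  have hstep : ∀ z, z ≠ v → ∃ y, 0 < ω z y ∧ Nat.find (hex y) < Nat.find (hex z) := by
    intro z hz
    have hdz := Nat.find_spec (hex z)
    cases hn : Nat.find (hex z) with
    | zero =>
        rw [hn] at hdz
        exact absurd hdz hz
    | succ m =>
        rw [hn] at hdz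
        rcases hdz with h1 | ⟨y, hy, hyn⟩
        · exact absurd h1 hz
        · refine ⟨y, hy, ?_⟩
          have h2 : Nat.find (hex y) ≤ m := Nat.find_min' (hex y) hyn
          omega
  choose nb hnb1 hnb2 using hstep
  set f : V → V := fun z => if hz : z = v then v else nb z hz with hf
  have hfv : f v = v := dif_pos rfl
  have hfz : ∀ z (hz : z ≠ v), f z = nb z hz := fun z hz => dif_neg hz
  have hpos : ∀ z, z ≠ v → 0 < ω z (f z) := fun z hz => by
    rw [hfz z hz]; exact hnb1 z hz
  have hdec : ∀ z, z ≠ v → Nat.find (hex (f z)) < Nat.find (hex z) := fun z hz => by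
    rw [hfz z hz]; exact hnb2 z hz
  have key : ∀ n (z : V), Nat.find (hex z) ≤ n → Reaches f z v := by
    intro n
    induction n with
    | zero =>
        intro z hz
        rcases eq_or_ne z v with rfl | hzv
        · exact reach_refl f _
        · exact absurd (lt_of_lt_of_le (hdec z hzv) hz) (Nat.not_lt_zero _)
    | succ n ih =>
        intro z hz
        rcases eq_or_ne z v with rfl | hzv
        · exact reach_refl f _
        · have h1 : Nat.find (hex (f z)) ≤ n := by have := hdec z hzv; omega
          exact reach_step (ih (f z) h1)
  refine ⟨f, ⟨hfv, hpos, fun z => key (Nat.find (hex z)) z le_rfl⟩, ?_⟩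
  apply Finset.prod_pos
  intro z hzmem
  exact hpos z (Finset.mem_erase.mp hzmem).1

lemma tau_pos (hnn : ∀ a b, 0 ≤ ω a b) (hsc : StronglyConnected ω) :
    0 < tau ω v := by
  obtain ⟨f, hf, hw⟩ := tree_exists (v := v) hsc
  have hmem : f ∈ Finset.univ.filter (fun f : V → V => IsInTree ω v f) :=
    Finset.mem_filter.mpr ⟨Finset.mem_univ f, hf⟩
  have hle : treeWeight ω v f ≤ tau ω v :=
    Finset.single_le_sum (f := fun g : V → V => treeWeight ω v g)
      (fun g _ => Finset.prod_nonneg fun z _ => hnn z (g z)) hmem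
  exact lt_of_lt_of_le hw hle

lemma max_principle (hnn : ∀ a b, 0 ≤ ω a b) (hsc : StronglyConnected ω)
    (g : V → ℝ) (hgv : g v = 0)
    (hrec : ∀ x, x ≠ v → deg ω x * g x = ∑ w, ω x w * g w) : ∀ x, g x ≤ 0 := by
  obtain ⟨m, -, hm⟩ := Finset.exists_max_image Finset.univ g ⟨v, Finset.mem_univ v⟩
  have hm' : ∀ y : V, g y ≤ g m := fun y => hm y (Finset.mem_univ y)
  have step : ∀ b, b ≠ v → g b = g m → ∀ c, 0 < ω b c → g c = g m := by
    intro b hbv hb c hbc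
    have h1 : ∑ w : V, ω b w * (g m - g w) = 0 := by
      simp_rw [mul_sub]
      rw [Finset.sum_sub_distrib, ← Finset.sum_mul, ← hrec b hbv, hb]
      rw [show (∑ w : V, ω b w) = deg ω b from rfl]
      ring
    have h2 : ∀ w ∈ Finset.univ, (0 : ℝ) ≤ ω b w * (g m - g w) := fun w _ =>
      mul_nonneg (hnn b w) (by have := hm' w; linarith)
    have h3 := (Finset.sum_eq_zero_iff_of_nonneg h2).mp h1 c (Finset.mem_univ c)
    rcases mul_eq_zero.mp h3 with h4 | h4
    · exact absurd h4 (ne_of_gt hbc)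
    · linarith
  have prop : ∀ b, Relation.ReflTransGen (fun a b => 0 < ω a b) m b →
      (g b = g m ∨ g v = g m) := by
    intro b hpath
    induction hpath with
    | refl => exact Or.inl rfl
    | @tail b' c' hab hbc ih =>
        rcases ih with h1 | h1
        · rcases eq_or_ne b' v with rfl | hbv
          · exact Or.inr h1
          · exact Or.inl (step _ hbv h1 _ hbc)
        · exact Or.inr h1
  have hvm : g v = g m := by rcases prop v (hsc m v) with h | h <;> exact h
  intro x
  have hm0 : g m = 0 := by rw [← hvm]; exact hgv
  have := hm' x
  linarith

lemma harmonic_zero (hnn : ∀ a b, 0 ≤ ω a b) (hsc : StronglyConnected ω)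
    (g : V → ℝ) (hgv : g v = 0)
    (hrec : ∀ x, x ≠ v → deg ω x * g x = ∑ w, ω x w * g w) : ∀ x, g x = 0 := by
  have h1 := max_principle hnn hsc g hgv hrec
  have h2 := max_principle (v := v) hnn hsc (fun y => - g y) (by simp [hgv]) (by
    intro x hx
    simp only [mul_neg]
    rw [Finset.sum_neg_distrib]
    exact congrArg Neg.neg (hrec x hx))
  intro x
  have h3 := h2 x
  simp only [neg_nonpos] at h3
  exact le_antisymm (h1 x) h3

end Analysis

/-- **In-tree formula for the hitting time across an edge.**
If `(v,u)` is an edge, the hitting time `H(u,v)` is an enumeration over all spanning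
in-trees containing the edge `(v,u)`; such an in-tree is encoded by its root `r` and
parent function `f` with `f v = u` (and `v ≠ r`). -/
theorem hitting_time_tree_formula_edge
    {V : Type*} [Fintype V] [DecidableEq V]
    (ω : V → V → ℝ) (hnn : ∀ u v, 0 ≤ ω u v) (hloop : ∀ v, ω v v = 0)
    (hsc : StronglyConnected ω)
    (H : V → V → ℝ) (hH0 : ∀ v, H v v = 0)
    (hHrec : ∀ u v, u ≠ v → H u v = 1 + ∑ w, (ω u w / deg ω u) * H w v)
    (u v : V) (he : 0 < ω v u) :
    H u v = (1 / (tau ω v * ω v u)) * ∑ r : V, ∑ f ∈ Finset.univ.filter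
        (fun f : V → V => IsInTree ω r f ∧ v ≠ r ∧ f v = u),
        deg ω r * treeWeight ω r f := by
  have huv : u ≠ v := by
    intro h
    rw [h, hloop v] at he
    exact lt_irrefl 0 he
  have hdeg : ∀ x : V, 0 < deg ω x := deg_pos_of hnn hsc ⟨u, v, huv⟩
  have htau : 0 < tau ω v := tau_pos hnn hsc
  have htau' : tau ω v ≠ 0 := ne_of_gt htau
  have hωvu : ω v u ≠ 0 := ne_of_gt he
  set φ : V → ℝ := fun y => H y v - Phi ω v y / tau ω v with hφ
  have hφv : φ v = 0 := by
    simp only [hφ]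
    rw [hH0 v, phi_at_v]
    simp
  have hφrec : ∀ x, x ≠ v → deg ω x * φ x = ∑ w, ω x w * φ w := by
    intro x hx
    have hH : deg ω x * H x v = deg ω x + ∑ w, ω x w * H w v := by
      rw [hHrec x v hx, mul_add, mul_one, Finset.mul_sum]
      congr 1
      refine Finset.sum_congr rfl fun w _ => ?_
      have hd := ne_of_gt (hdeg x)
      field_simp [hd]
    have hP := phi_rec (ω := ω) (v := v) (x := x) hnn hx
    have expand : ∑ w, ω x w * φ w
        = (∑ w, ω x w * H w v) - (∑ w, ω x w * Phi ω v w) / tau ω v := by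
      simp only [hφ]
      simp_rw [mul_sub]
      rw [Finset.sum_sub_distrib, Finset.sum_div]
      congr 1
      refine Finset.sum_congr rfl fun w _ => ?_
      ring
    have hPsum : (∑ w, ω x w * Phi ω v w)
        = deg ω x * Phi ω v x - deg ω x * tau ω v := by linarith
    simp only [hφ]
    rw [mul_sub, hH, expand, hPsum]
    field_simp [htau']
    ring
  have hall := harmonic_zero hnn hsc φ hφv hφrec
  have hHu : H u v = Phi ω v u / tau ω v := by
    have h9 := hall u
    simp only [hφ] at h9
    linarith
  have hrhs : (∑ r : V, ∑ f ∈ Finset.univ.filter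
      (fun f : V → V => IsInTree ω r f ∧ v ≠ r ∧ f v = u),
      deg ω r * treeWeight ω r f) = ω v u * Phi ω v u := by
    rw [Phi, Finset.mul_sum]
    refine Finset.sum_congr rfl fun r _ => ?_
    rw [tree_cut_edge he r, forest_root_expand r u]
  rw [hrhs, hHu]
  field_simp


end Paper
end

section
/- Let Γ be a connected weighted undirected graph (nonnegative edge weights, no loops). Then the hitting time of the random walk with transition matrix P = D⁻¹A satisfies H(u,v) = (1/τ) · Σ_{T₁∪T₂ ∈ 𝔽₂, u ∈ T₂, v ∈ T₁} vol(T₂)·ω(T₁∪T₂), where τ is the total weight of spanning trees of Γ, 𝔽₂ the set of (unrooted) spanning 2-forests, vol(T) = Σ_{z∈T} d_z with d_z = Σ_w ω(z,w), and ω(F) = Π_{e∈E(F)} ω(e). -/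
/-!
Fix the target `v` and let `S(x)` be the sum, over the spanning 2-forests separating `x` from `v`,
of the volume of the tree containing `x` times the weight of the forest. Then `S(v) = 0` and, for
`u ≠ v`, `d_u S(u) = d_u τ + ∑_w ω(u, w) S(w)`; so `S / τ` solves the linear system defining
`H(·, v)`, whose solution is unique by the maximum principle.

For the recurrence, compare the forests counted in `S(u)` and `S(w)`. Those in which `u` and `w`
lie in the same tree contribute equally to both. Adding the edge `uw` to the others is a bijection
onto the spanning trees through `uw`. For a fixed spanning tree `T`, deleting the edges `uw` of `T`
cuts off branches that partition `V \ {u}`, exactly one of them containing `v`, and the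
contributions of `T` add up to `d_u ω(T)`.
-/

open scoped Classical
open Finset Matrix

namespace SimpleGraph

variable {V : Type*} {G : SimpleGraph V}

lemma Reachable.deleteEdges_or {z a b : V} (h : G.Reachable z a) (hab : a ≠ b) :
    (G.deleteEdges {s(a, b)}).Reachable z a ∨ (G.deleteEdges {s(a, b)}).Reachable z b := by
  obtain ⟨p, hp⟩ := h.exists_isPath
  by_cases hpe : s(a, b) ∈ p.edges
  · have hb := p.snd_mem_support_of_mem_edges hpe
    have ha := Walk.endpoint_notMem_support_takeUntil hp hb hab
    exact .inr ⟨(p.takeUntil b hb).toDeleteEdge _ (ha ∘ Walk.fst_mem_support_of_mem_edges _)⟩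
  · exact .inl ⟨p.toDeleteEdge _ hpe⟩

end SimpleGraph

namespace Paper

open SimpleGraph

section EdgeGraph

variable {V : Type*}

abbrev edgeGraph (E : Finset (Sym2 V)) : SimpleGraph V := fromEdgeSet E

lemma edgeGraph_adj {E : Finset (Sym2 V)} {x y : V} :
    (edgeGraph E).Adj x y ↔ s(x, y) ∈ E ∧ x ≠ y := by
  simp

variable [DecidableEq V]

lemma edgeGraph_erase (E : Finset (Sym2 V)) (e : Sym2 V) :
    edgeGraph (E.erase e) = (edgeGraph E).deleteEdges {e} := by
  rw [edgeGraph, deleteEdges_fromEdgeSet, coe_erase]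

lemma edgeGraph_insert (E : Finset (Sym2 V)) (a b : V) :
    edgeGraph (insert s(a, b) E) = edgeGraph E ⊔ edge a b := by
  rw [edgeGraph, coe_insert, Set.insert_eq, fromEdgeSet_union, sup_comm, edge]

end EdgeGraph

section SeparatingForest

variable {V : Type*} {ωs : Sym2 V → ℝ} {E : Finset (Sym2 V)} {a b c z : V}

structure IsSeparatingForest (ωs : Sym2 V → ℝ) (a b : V) (E : Finset (Sym2 V)) : Prop where
  pos : ∀ e ∈ E, 0 < ωs e
  isAcyclic : (edgeGraph E).IsAcyclic
  not_reachable : ¬ (edgeGraph E).Reachable a b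
  reachable_or : ∀ z, (edgeGraph E).Reachable z a ∨ (edgeGraph E).Reachable z b

lemma isWTwoForest_and_not_reachable_iff :
    IsWTwoForest ωs E ∧ ¬ (edgeGraph E).Reachable a b ↔ IsSeparatingForest ωs a b E := by
  let comp := (edgeGraph E).connectedComponentMk
  suffices h : ¬ (edgeGraph E).Reachable a b →
      (Nat.card (edgeGraph E).ConnectedComponent = 2 ↔
        ∀ z, (edgeGraph E).Reachable z a ∨ (edgeGraph E).Reachable z b) by
    constructor
    · rintro ⟨⟨hpos, hac, hcard⟩, hab⟩
      exact ⟨hpos, hac, hab, (h hab).mp hcard⟩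
    · rintro ⟨hpos, hac, hab, hor⟩
      exact ⟨⟨hpos, hac, (h hab).mpr hor⟩, hab⟩
  intro hab
  have hba : comp b ≠ comp a := fun h ↦ hab (ConnectedComponent.exact h.symm)
  rw [Nat.card_eq_two_iff' (comp a)]
  constructor
  · rintro ⟨c, -, hc⟩ z
    refine or_iff_not_imp_left.mpr fun hza ↦ ConnectedComponent.exact ?_
    exact (hc (comp z) fun h ↦ hza (ConnectedComponent.exact h)).trans (hc _ hba).symm
  · refine fun hor ↦ ⟨comp b, hba, fun c hc ↦ ?_⟩
    induction c using ConnectedComponent.ind with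
    | h z => exact ConnectedComponent.sound ((hor z).resolve_left fun h ↦ hc
        (ConnectedComponent.sound h))

namespace IsSeparatingForest

lemma symm (h : IsSeparatingForest ωs a b E) : IsSeparatingForest ωs b a E :=
  ⟨h.pos, h.isAcyclic, fun hba ↦ h.not_reachable hba.symm, fun z ↦ (h.reachable_or z).symm⟩

lemma reachable_right_iff (h : IsSeparatingForest ωs a b E) :
    (edgeGraph E).Reachable z b ↔ ¬ (edgeGraph E).Reachable z a :=
  ⟨fun hzb hza ↦ h.not_reachable (hza.symm.trans hzb), (h.reachable_or z).resolve_left⟩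

lemma of_reachable_right (h : IsSeparatingForest ωs a b E) (hbc : (edgeGraph E).Reachable b c) :
    IsSeparatingForest ωs a c E :=
  ⟨h.pos, h.isAcyclic, fun hac ↦ h.not_reachable (hac.trans hbc.symm),
    fun z ↦ (h.reachable_or z).imp_right (·.trans hbc)⟩

lemma of_reachable_left (h : IsSeparatingForest ωs a b E) (hac : (edgeGraph E).Reachable a c) :
    IsSeparatingForest ωs c b E :=
  (h.symm.of_reachable_right hac).symm

lemma notMem (h : IsSeparatingForest ωs a b E) (hcb : (edgeGraph E).Reachable c b) :
    s(a, c) ∉ E := fun hac ↦ by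
  have hne : a ≠ c := by rintro rfl; exact h.not_reachable hcb
  exact h.not_reachable ((edgeGraph_adj.mpr ⟨hac, hne⟩).reachable.trans hcb)

lemma isWTree_insert [DecidableEq V] (h : IsSeparatingForest ωs a b E)
    (hcb : (edgeGraph E).Reachable c b) (hac : 0 < ωs s(a, c)) :
    IsWTree ωs (insert s(a, c) E) := by
  have hne : a ≠ c := by rintro rfl; exact h.not_reachable hcb
  have hadj : (edgeGraph E ⊔ edge a c).Adj a c := by simp [edge_adj, hne]
  have hreach : ∀ z, (edgeGraph E ⊔ edge a c).Reachable z a := fun z ↦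
    (h.reachable_or z).elim (·.mono le_sup_left)
      fun hzb ↦ ((hzb.trans hcb.symm).mono le_sup_left).trans hadj.symm.reachable
  refine ⟨fun e he ↦ ?_, ?_, ?_⟩
  · obtain rfl | he := mem_insert.mp he
    exacts [hac, h.pos e he]
  · change (edgeGraph _).IsAcyclic
    rw [edgeGraph_insert]
    exact h.isAcyclic.sup_edge_of_not_reachable fun hac ↦ h.not_reachable (hac.trans hcb)
  · change (edgeGraph _).Connected
    rw [edgeGraph_insert]
    exact (connected_iff_exists_forall_reachable _).mpr ⟨a, fun z ↦ (hreach z).symm⟩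

end IsSeparatingForest

lemma IsWTree.isSeparatingForest_erase [DecidableEq V] {T : Finset (Sym2 V)}
    (hT : IsWTree ωs T) (hloop : ∀ x : V, ωs s(x, x) = 0) (hab : s(a, b) ∈ T) :
    IsSeparatingForest ωs a b (T.erase s(a, b)) := by
  obtain ⟨hpos, hac, hconn⟩ := hT
  have hne : a ≠ b := by rintro rfl; exact (hpos _ hab).ne' (hloop a)
  have hadj : (edgeGraph T).Adj a b := edgeGraph_adj.mpr ⟨hab, hne⟩
  refine ⟨fun e he ↦ hpos e (mem_of_mem_erase he), ?_, ?_, fun z ↦ ?_⟩ <;>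
    rw [edgeGraph_erase]
  exacts [hac.anti (deleteEdges_le _), isAcyclic_iff_forall_adj_isBridge.mp hac hadj,
    (hconn.preconnected z a).deleteEdges_or hne]

end SeparatingForest

section Connectivity

variable {V : Type*} [Fintype V] {ωs : Sym2 V → ℝ}

lemma exists_isWTree [Nonempty V] (hloop : ∀ x : V, ωs s(x, x) = 0) (hconn : ConnectedW ωs) :
    ∃ T, IsWTree ωs T := by
  let G : SimpleGraph V := fromEdgeSet {e | 0 < ωs e}
  have hG : G.Connected := by
    refine ⟨fun a b ↦ (reachable_iff_reflTransGen a b).mpr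
      (Relation.ReflTransGen.mono (fun x y hxy ↦ (fromEdgeSet_adj _).mpr ⟨hxy, ?_⟩) _ _
        (hconn a b))⟩
    rintro rfl
    exact hxy.ne' (hloop x)
  obtain ⟨T, hTG, hT⟩ := hG.exists_isTree_le
  refine ⟨T.edgeFinset, fun e he ↦ ?_, ?_, ?_⟩
  · have := edgeSet_mono hTG (mem_edgeFinset.mp he)
    exact ((edgeSet_fromEdgeSet _).subset this).1
  all_goals rw [coe_edgeFinset, fromEdgeSet_edgeSet]
  exacts [hT.isAcyclic, hT.connected]

lemma tauW_pos [Nonempty V] (hloop : ∀ x : V, ωs s(x, x) = 0) (hconn : ConnectedW ωs) :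
    0 < tauW ωs := by
  obtain ⟨T, hT⟩ := exists_isWTree hloop hconn
  exact sum_pos (fun T hT ↦ prod_pos (mem_filter.mp hT).2.1) ⟨T, mem_filter.mpr ⟨mem_univ _, hT⟩⟩

lemma le_degS (hnn : ∀ e, 0 ≤ ωs e) (x w : V) : ωs s(x, w) ≤ degS ωs x :=
  single_le_sum (fun _ _ ↦ hnn _) (mem_univ w)

lemma ConnectedW.degS_pos (hconn : ConnectedW ωs) (hnn : ∀ e, 0 ≤ ωs e) {x v : V} (hxv : x ≠ v) :
    0 < degS ωs x := by
  obtain ⟨c, hxc, -⟩ := (hconn x v).cases_head.resolve_left hxv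
  exact hxc.trans_le (le_degS hnn x c)

end Connectivity

section MaximumPrinciple

variable {V : Type*} [Fintype V]

lemma le_of_harmonic_off {P : V → V → ℝ} {v : V} (hP : ∀ x y, 0 ≤ P x y)
    (hrow : ∀ x ≠ v, ∑ y, P x y = 1) (hreach : ∀ x, Relation.ReflTransGen (0 < P · ·) x v)
    {g : V → ℝ} (hg : ∀ x ≠ v, g x = ∑ y, P x y * g y) (x : V) : g x ≤ g v := by
  obtain ⟨x₀, -, hx₀⟩ := exists_max_image univ g ⟨v, mem_univ v⟩
  have hle : ∀ y, g y ≤ g x₀ := fun y ↦ hx₀ y (mem_univ y)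
  have hstep : ∀ a b, a ≠ v → g a = g x₀ → 0 < P a b → g b = g x₀ := by
    intro a b hav ha hab
    have hzero : ∑ y, P a y * (g x₀ - g y) = 0 := by
      simp_rw [mul_sub, sum_sub_distrib, ← sum_mul, hrow a hav, ← hg a hav, ha]
      ring
    have hb := (sum_eq_zero_iff_of_nonneg fun y _ ↦
      mul_nonneg (hP a y) (sub_nonneg.mpr (hle y))).mp hzero b (mem_univ b)
    linarith [(mul_eq_zero.mp hb).resolve_left hab.ne']
  have hmax : g v = g x₀ := by
    suffices ∀ a, Relation.ReflTransGen (0 < P · ·) a v → g a = g x₀ → g v = g x₀ from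
      this x₀ (hreach x₀) rfl
    intro a ha
    induction ha using Relation.ReflTransGen.head_induction_on with
    | refl => exact id
    | @head a c hac _ ih =>
      intro hga
      by_cases hav : a = v
      · exact hav ▸ hga
      · exact ih (hstep a c hav hga hac)
  exact hmax ▸ hle x

lemma eq_zero_of_harmonic_off {ωs : Sym2 V → ℝ} (hnn : ∀ e, 0 ≤ ωs e) (hconn : ConnectedW ωs)
    {v : V} {g : V → ℝ} (hv : g v = 0) (hg : ∀ x ≠ v, g x = ∑ w, ωs s(x, w) / degS ωs x * g w) :
    g = 0 := by
  have hP : ∀ x w, 0 ≤ ωs s(x, w) / degS ωs x :=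
    fun x w ↦ div_nonneg (hnn _) ((hnn _).trans (le_degS hnn x w))
  have hrow : ∀ x ≠ v, ∑ w, ωs s(x, w) / degS ωs x = 1 :=
    fun x hx ↦ by rw [← sum_div]; exact div_self (hconn.degS_pos hnn hx).ne'
  have hreach : ∀ x, Relation.ReflTransGen (fun a b ↦ 0 < ωs s(a, b) / degS ωs a) x v :=
    fun x ↦ Relation.ReflTransGen.mono (fun a b hab ↦ div_pos hab (hab.trans_le (le_degS hnn a b)))
      _ _ (hconn x v)
  funext x
  have h₁ := le_of_harmonic_off hP hrow hreach hg x
  have h₂ := le_of_harmonic_off hP hrow hreach (g := -g)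
    (fun x hx ↦ by simp [hg x hx, sum_neg_distrib]) x
  simp only [Pi.neg_apply, neg_le_neg_iff] at h₂
  simp only [Pi.zero_apply]
  linarith

end MaximumPrinciple

section ForestSum

variable {V : Type*} [Fintype V] [DecidableEq V] {ωs : Sym2 V → ℝ} {E : Finset (Sym2 V)} {a b : V}

noncomputable def compVol (ωs : Sym2 V → ℝ) (E : Finset (Sym2 V)) (a : V) : ℝ :=
  ∑ z with (edgeGraph E).Reachable z a, degS ωs z

lemma compVol_congr (h : (edgeGraph E).Reachable a b) : compVol ωs E a = compVol ωs E b :=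
  sum_congr (filter_congr fun _ _ ↦ ⟨(·.trans h), (·.trans h.symm)⟩) fun _ _ ↦ rfl

lemma IsSeparatingForest.compVol_add_compVol (h : IsSeparatingForest ωs a b E) :
    compVol ωs E a + compVol ωs E b = ∑ z, degS ωs z := by
  rw [← sum_filter_add_sum_filter_not univ fun z ↦ (edgeGraph E).Reachable z a, compVol, compVol,
    filter_congr fun _ _ ↦ h.reachable_right_iff]

/-- The numerator of the forest formula for the hitting time of `v` from `a`. -/
noncomputable def forestSum (ωs : Sym2 V → ℝ) (a v : V) : ℝ :=
  ∑ E with IsSeparatingForest ωs a v E, compVol ωs E a * wgt ωs E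

lemma forestSum_self (v : V) : forestSum ωs v v = 0 :=
  sum_eq_zero fun _ hE ↦ ((mem_filter.mp hE).2.not_reachable .rfl).elim

lemma forestSum_eq_add (a w v : V) :
    forestSum ωs a v =
      ∑ E with IsSeparatingForest ωs a v E ∧ (edgeGraph E).Reachable w a, compVol ωs E a * wgt ωs E
      + ∑ E with IsSeparatingForest ωs a v E ∧ (edgeGraph E).Reachable w v,
          compVol ωs E a * wgt ωs E := by
  rw [forestSum, ← sum_filter_add_sum_filter_not _ fun E ↦ (edgeGraph E).Reachable w a,
    filter_filter, filter_filter]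
  congr 2
  exact filter_congr fun E _ ↦ and_congr_right fun h ↦ h.reachable_right_iff.symm

lemma sum_separating_reachable_comm (u w v : V) :
    ∑ E with IsSeparatingForest ωs u v E ∧ (edgeGraph E).Reachable w u, compVol ωs E u * wgt ωs E
      = ∑ E with IsSeparatingForest ωs w v E ∧ (edgeGraph E).Reachable u w,
          compVol ωs E w * wgt ωs E := by
  refine sum_congr (filter_congr fun E _ ↦ ?_) fun E hE ↦ ?_
  · exact ⟨fun ⟨h, hwu⟩ ↦ ⟨h.of_reachable_left hwu.symm, hwu.symm⟩,
      fun ⟨h, huw⟩ ↦ ⟨h.of_reachable_left huw.symm, huw.symm⟩⟩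
  · rw [compVol_congr (mem_filter.mp hE).2.2]

/-- Adding the edge `s(a, b)` to the tree of `a` turns these 2-forests into the spanning trees
through `s(a, b)`. -/
lemma mul_sum_separating_eq_sum_isWTree (hnn : ∀ e, 0 ≤ ωs e) (hloop : ∀ x : V, ωs s(x, x) = 0)
    (F : Finset (Sym2 V) → ℝ) (a b v : V) :
    ωs s(a, b) * ∑ E with IsSeparatingForest ωs a v E ∧ (edgeGraph E).Reachable b v, F E * wgt ωs E
      = ∑ T with IsWTree ωs T ∧ s(a, b) ∈ T ∧ (edgeGraph (T.erase s(a, b))).Reachable b v,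
          F (T.erase s(a, b)) * wgt ωs T := by
  obtain hab | hab := (hnn s(a, b)).lt_or_eq
  · rw [mul_sum]
    refine sum_nbij' (insert s(a, b)) (·.erase s(a, b)) ?_ ?_ ?_ ?_ ?_ <;>
      simp only [mem_filter, mem_univ, true_and]
    · rintro E ⟨h, hbv⟩
      refine ⟨h.isWTree_insert hbv hab, mem_insert_self _ _, ?_⟩
      rwa [erase_insert (h.notMem hbv)]
    · rintro T ⟨hT, hmem, hbv⟩
      exact ⟨(hT.isSeparatingForest_erase hloop hmem).of_reachable_right hbv, hbv⟩
    · rintro E ⟨h, hbv⟩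
      exact erase_insert (h.notMem hbv)
    · rintro T ⟨-, hmem, -⟩
      exact insert_erase hmem
    · rintro E ⟨h, hbv⟩
      simp only [wgt, erase_insert (h.notMem hbv), prod_insert (h.notMem hbv)]
      ring
  · rw [← hab, zero_mul, eq_comm]
    refine sum_eq_zero fun T hT ↦ ?_
    obtain ⟨hT, hmem, -⟩ := (mem_filter.mp hT).2
    exact ((hT.1 _ hmem).ne hab).elim

end ForestSum

section Branch

variable {V : Type*} [Fintype V] [DecidableEq V] {ωs : Sym2 V → ℝ} {T : Finset (Sym2 V)}
  {u v w w' z : V}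

noncomputable def branch (T : Finset (Sym2 V)) (u w : V) : Finset V :=
  univ.filter fun z ↦ (edgeGraph (T.erase s(u, w))).Reachable z w

lemma mem_branch : z ∈ branch T u w ↔ (edgeGraph (T.erase s(u, w))).Reachable z w := by
  simp [branch]

lemma compVol_erase : compVol ωs (T.erase s(u, w)) w = ∑ z ∈ branch T u w, degS ωs z := rfl

lemma disjoint_branch (hT : IsWTree ωs T) (hloop : ∀ x : V, ωs s(x, x) = 0) (hw : s(u, w) ∈ T)
    (hw' : s(u, w') ∈ T) (hne : w ≠ w') :
    Disjoint (branch T u w) (branch T u w') := by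
  have h := hT.isSeparatingForest_erase hloop hw
  have h' := hT.isSeparatingForest_erase hloop hw'
  refine disjoint_left.mpr fun z hz hz' ↦ ?_
  rw [mem_branch, edgeGraph_erase, reachable_deleteEdges_iff_exists_walk] at hz'
  obtain ⟨p, hp⟩ := hz'
  by_cases hu : u ∈ p.support
  · refine h'.not_reachable ?_
    rw [edgeGraph_erase, reachable_deleteEdges_iff_exists_walk]
    exact ⟨p.dropUntil u hu, fun he ↦ hp (p.edges_dropUntil_subset_edges hu he)⟩
  · have hzw' : (edgeGraph (T.erase s(u, w))).Reachable z w' := by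
      rw [edgeGraph_erase, reachable_deleteEdges_iff_exists_walk]
      exact ⟨p, fun he ↦ hu (p.fst_mem_support_of_mem_edges he)⟩
    have huw' : (edgeGraph (T.erase s(u, w))).Adj u w' := by
      refine edgeGraph_adj.mpr ⟨mem_erase.mpr ⟨fun he ↦ hne ?_, hw'⟩, ?_⟩
      · exact (Sym2.congr_right.mp he).symm
      · rintro rfl; exact h'.not_reachable .rfl
    exact h.not_reachable ((hzw'.trans huw'.symm.reachable).symm.trans (mem_branch.mp hz))

lemma exists_mem_branch (hT : IsWTree ωs T) (hz : z ≠ u) :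
    ∃ w, s(u, w) ∈ T ∧ z ∈ branch T u w := by
  obtain ⟨p, hp⟩ := (hT.2.2.preconnected u z).exists_isPath
  cases p with
  | nil => exact (hz rfl).elim
  | @cons _ w _ hadj p =>
    refine ⟨w, (edgeGraph_adj.mp hadj).1, ?_⟩
    rw [mem_branch, edgeGraph_erase, reachable_deleteEdges_iff_exists_walk]
    refine ⟨p.reverse, fun he ↦ ((Walk.cons_isPath_iff hadj p).mp hp).2 ?_⟩
    rw [Walk.edges_reverse, List.mem_reverse] at he
    exact p.fst_mem_support_of_mem_edges he

lemma biUnion_branch (hT : IsWTree ωs T) (hloop : ∀ x : V, ωs s(x, x) = 0) :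
    (univ.filter fun w ↦ s(u, w) ∈ T).biUnion (branch T u) = univ.erase u := by
  ext z
  simp only [mem_biUnion, mem_filter, mem_univ, true_and, mem_erase, and_true]
  constructor
  · rintro ⟨w, hw, hz⟩ rfl
    exact (hT.isSeparatingForest_erase hloop hw).not_reachable (mem_branch.mp hz)
  · exact exists_mem_branch hT

lemma sum_sum_branch (hT : IsWTree ωs T) (hloop : ∀ x : V, ωs s(x, x) = 0) (f : V → ℝ) :
    ∑ w with s(u, w) ∈ T, ∑ z ∈ branch T u w, f z = ∑ z, f z - f u := by
  rw [← sum_biUnion fun w hw w' hw' hne ↦ disjoint_branch hT hloop (mem_filter.mp hw).2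
    (mem_filter.mp hw').2 hne, biUnion_branch hT hloop, sum_erase_eq_sub (mem_univ u)]

/-- The branches of `T` at `u` partition the vertices other than `u`, and exactly one of them
contains `v`. -/
lemma sum_compVol_erase_sub_sum_compVol_erase (hT : IsWTree ωs T)
    (hloop : ∀ x : V, ωs s(x, x) = 0) (huv : u ≠ v) :
    ∑ w with s(u, w) ∈ T ∧ (edgeGraph (T.erase s(u, w))).Reachable w v,
        compVol ωs (T.erase s(u, w)) u
      - ∑ w with s(u, w) ∈ T ∧ (edgeGraph (T.erase s(u, w))).Reachable u v,
        compVol ωs (T.erase s(u, w)) w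
      = degS ωs u := by
  have hsep : ∀ {w}, s(u, w) ∈ T → IsSeparatingForest ωs u w (T.erase s(u, w)) :=
    hT.isSeparatingForest_erase hloop
  have h₁ : ∑ w with s(u, w) ∈ T ∧ (edgeGraph (T.erase s(u, w))).Reachable w v,
        compVol ωs (T.erase s(u, w)) u
      = ∑ w with s(u, w) ∈ T ∧ v ∈ branch T u w,
        (∑ z, degS ωs z - ∑ z ∈ branch T u w, degS ωs z) := by
    refine sum_congr (filter_congr fun w _ ↦ and_congr_right fun _ ↦ ?_) fun w hw ↦ ?_
    · rw [mem_branch, reachable_comm]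
    · rw [← (hsep (mem_filter.mp hw).2.1).compVol_add_compVol, compVol_erase, add_sub_cancel_right]
  have h₂ : ∑ w with s(u, w) ∈ T ∧ (edgeGraph (T.erase s(u, w))).Reachable u v,
        compVol ωs (T.erase s(u, w)) w
      = ∑ w with s(u, w) ∈ T ∧ v ∉ branch T u w, ∑ z ∈ branch T u w, degS ωs z := by
    refine sum_congr (filter_congr fun w _ ↦ and_congr_right fun huw ↦ ?_) fun _ _ ↦ rfl
    rw [mem_branch, reachable_comm, (hsep huw).reachable_right_iff, not_not]
  have h₃ : ∑ w with s(u, w) ∈ T ∧ v ∈ branch T u w, ∑ z, degS ωs z = ∑ z, degS ωs z := by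
    rw [← filter_filter, sum_filter]
    simp_rw [← sum_ite_eq' (branch T u _) v fun _ ↦ ∑ z, degS ωs z]
    rw [sum_sum_branch hT hloop, sum_ite_eq', if_pos (mem_univ v), if_neg huv, sub_zero]
  have h₄ := sum_filter_add_sum_filter_not (univ.filter fun w ↦ s(u, w) ∈ T)
    (fun w ↦ v ∈ branch T u w) fun w ↦ ∑ z ∈ branch T u w, degS ωs z
  rw [filter_filter, filter_filter, sum_sum_branch hT hloop] at h₄
  rw [h₁, h₂, sum_sub_distrib, h₃]
  linarith

end Branch

section Recurrence

variable {V : Type*} [Fintype V] [DecidableEq V] {ωs : Sym2 V → ℝ} {u v : V}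

lemma mul_forestSum_sub_forestSum (hnn : ∀ e, 0 ≤ ωs e) (hloop : ∀ x : V, ωs s(x, x) = 0)
    (u w v : V) :
    ωs s(u, w) * (forestSum ωs u v - forestSum ωs w v)
      = ∑ T with IsWTree ωs T ∧ s(u, w) ∈ T ∧ (edgeGraph (T.erase s(u, w))).Reachable w v,
          compVol ωs (T.erase s(u, w)) u * wgt ωs T
        - ∑ T with IsWTree ωs T ∧ s(u, w) ∈ T ∧ (edgeGraph (T.erase s(u, w))).Reachable u v,
          compVol ωs (T.erase s(u, w)) w * wgt ωs T := by
  have hD := mul_sum_separating_eq_sum_isWTree hnn hloop (compVol ωs · w) w u v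
  rw [Sym2.eq_swap] at hD
  rw [← mul_sum_separating_eq_sum_isWTree hnn hloop (compVol ωs · u) u w v, ← hD,
    forestSum_eq_add u w v, forestSum_eq_add w u v, sum_separating_reachable_comm u w v]
  ring

lemma sum_sum_isWTree_sub_sum_sum_isWTree (hloop : ∀ x : V, ωs s(x, x) = 0) (huv : u ≠ v) :
    ∑ w, ∑ T with IsWTree ωs T ∧ s(u, w) ∈ T ∧ (edgeGraph (T.erase s(u, w))).Reachable w v,
        compVol ωs (T.erase s(u, w)) u * wgt ωs T
      - ∑ w, ∑ T with IsWTree ωs T ∧ s(u, w) ∈ T ∧ (edgeGraph (T.erase s(u, w))).Reachable u v,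
        compVol ωs (T.erase s(u, w)) w * wgt ωs T
      = degS ωs u * tauW ωs := by
  calc _ = ∑ T with IsWTree ωs T,
          ∑ w with s(u, w) ∈ T ∧ (edgeGraph (T.erase s(u, w))).Reachable w v,
            compVol ωs (T.erase s(u, w)) u * wgt ωs T
        - ∑ T with IsWTree ωs T,
          ∑ w with s(u, w) ∈ T ∧ (edgeGraph (T.erase s(u, w))).Reachable u v,
            compVol ωs (T.erase s(u, w)) w * wgt ωs T := by
        congr 1 <;>
          exact sum_comm' fun w T ↦ by simp only [mem_filter, mem_univ, true_and, and_comm]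
    _ = ∑ T with IsWTree ωs T, degS ωs u * wgt ωs T := by
        rw [← sum_sub_distrib]
        refine sum_congr rfl fun T hT ↦ ?_
        rw [← sum_mul, ← sum_mul, ← sub_mul,
          sum_compVol_erase_sub_sum_compVol_erase (mem_filter.mp hT).2 hloop huv]
    _ = degS ωs u * tauW ωs := by rw [tauW, mul_sum]

theorem forestSum_recurrence (hnn : ∀ e, 0 ≤ ωs e) (hloop : ∀ x : V, ωs s(x, x) = 0)
    (huv : u ≠ v) :
    degS ωs u * forestSum ωs u v = degS ωs u * tauW ωs + ∑ w, ωs s(u, w) * forestSum ωs w v := by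
  have h : ∑ w, ωs s(u, w) * (forestSum ωs u v - forestSum ωs w v) = degS ωs u * tauW ωs := by
    simp_rw [mul_forestSum_sub_forestSum hnn hloop u _ v]
    rw [sum_sub_distrib, sum_sum_isWTree_sub_sum_sum_isWTree hloop huv]
  rw [← h, degS, sum_mul]
  simp_rw [mul_sub, sum_sub_distrib]
  ring

/-- **Forest formula for the hitting time of a connected weighted undirected graph.**
The sum is over spanning 2-forests separating `u` from `v`; `vol(T₂)` is the volume
of the component containing `u`. -/
theorem hitting_time_forest_formula_undirected
    {V : Type*} [Fintype V] [DecidableEq V]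
    (ωs : Sym2 V → ℝ) (hnn : ∀ e, 0 ≤ ωs e) (hloop : ∀ v : V, ωs s(v, v) = 0)
    (hconn : ConnectedW ωs)
    (H : V → V → ℝ) (hH0 : ∀ v, H v v = 0)
    (hHrec : ∀ u v, u ≠ v → H u v = 1 + ∑ w, (ωs s(u, w) / degS ωs u) * H w v)
    (u v : V) :
    H u v = (1 / tauW ωs) * ∑ E ∈ Finset.univ.filter (fun E : Finset (Sym2 V) =>
        IsWTwoForest ωs E ∧ ¬ (SimpleGraph.fromEdgeSet (E : Set (Sym2 V))).Reachable u v),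
      (∑ z ∈ Finset.univ.filter (fun z : V =>
          (SimpleGraph.fromEdgeSet (E : Set (Sym2 V))).Reachable z u), degS ωs z) *
        wgt ωs E := by
  have : Nonempty V := ⟨v⟩
  have hτ : tauW ωs ≠ 0 := (tauW_pos hloop hconn).ne'
  have hS : ∀ x ≠ v, forestSum ωs x v / tauW ωs
      = 1 + ∑ w, ωs s(x, w) / degS ωs x * (forestSum ωs w v / tauW ωs) := by
    intro x hx
    have hd := (hconn.degS_pos hnn hx).ne'
    have hrec := forestSum_recurrence hnn hloop hx
    simp_rw [div_mul_div_comm, ← sum_div]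
    field_simp
    linarith
  have hH : (fun x ↦ H x v - forestSum ωs x v / tauW ωs) = 0 := by
    refine eq_zero_of_harmonic_off hnn hconn (v := v) ?_ fun x hx ↦ ?_
    · rw [hH0, forestSum_self, zero_div, sub_zero]
    rw [hHrec x v hx, hS x hx]
    simp_rw [mul_sub, sum_sub_distrib]
    ring
  rw [sub_eq_zero.mp (congrFun hH u), one_div_mul_eq_div]
  exact congrArg (· / tauW ωs) <| sum_congr
    (filter_congr fun E _ ↦ isWTwoForest_and_not_reachable_iff.symm) fun _ _ ↦ rfl

end Recurrence

end Paper
end
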